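/- arXiv:2512.06101 — 8 statements merged into one kernel-verified Lean document; each statement's English description precedes it below -/
import Mathlib

section
/- Let ε > 0, λ > 0, and let f : [0,∞) × [0,∞) → [0,∞) be continuous, C¹ in t, with f(·,t) integrable on (0,∞) for every t, and such that t ↦ ∫₀^∞ f(v,t) dv can be differentiated under the integral sign. If f satisfies the ε-BDY equation pointwise, then d/dt ∫₀^∞ f(v,t) dv = 0 for all t ≥ 0; i.e. the ε-BDY dynamics conserves the total probability mass. -/
/-!
Integrating the equation in `v`, each gain term is the shift by `±ε` of a loss term:
`∫_{v>0} f(v+ε) = ∫_{v>ε} f = r[f]` and `∫_{v≥ε} r[f] f(v-ε) = r[f] ∫_{v>0} f`,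
so the right-hand side integrates to zero whatever the value of the rate `r[f]`.
-/

open MeasureTheory Set

section Shift

variable {E : Type*} [NormedAddCommGroup E]

theorem integral_Ioi_comp_add_right [NormedSpace ℝ E] (g : ℝ → E) (a c : ℝ) :
    ∫ v in Ioi a, g (v + c) = ∫ v in Ioi (a + c), g v := by
  simpa using (measurePreserving_add_right volume c).setIntegral_preimage_emb
    (measurableEmbedding_addRight c) g (Ioi (a + c))

theorem integral_Ioi_comp_sub_right [NormedSpace ℝ E] (g : ℝ → E) (a c : ℝ) :
    ∫ v in Ioi a, g (v - c) = ∫ v in Ioi (a - c), g v := by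
  simpa [sub_eq_add_neg] using integral_Ioi_comp_add_right g a (-c)

theorem integrableOn_Ioi_comp_add_right_iff {g : ℝ → E} {a : ℝ} (c : ℝ) :
    IntegrableOn (fun v => g (v + c)) (Ioi a) ↔ IntegrableOn g (Ioi (a + c)) := by
  simpa [Function.comp_def] using
    (measurePreserving_add_right volume c).integrableOn_comp_preimage
    (measurableEmbedding_addRight c) (f := g) (s := Ioi (a + c))

theorem integrableOn_Ioi_comp_sub_right_iff {g : ℝ → E} {a : ℝ} (c : ℝ) :
    IntegrableOn (fun v => g (v - c)) (Ioi a) ↔ IntegrableOn g (Ioi (a - c)) := by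
  simpa [sub_eq_add_neg] using integrableOn_Ioi_comp_add_right_iff (g := g) (a := a) (-c)

end Shift

section Cutoff

variable {h : ℝ → ℝ} {a ε : ℝ}

theorem mul_ite_le_eq_indicator (h : ℝ → ℝ) (ε : ℝ) :
    (fun v => h v * if ε ≤ v then 1 else 0) = (Ici ε).indicator h := by
  ext v
  by_cases hv : ε ≤ v <;> simp [hv]

theorem Ioi_inter_Ici_of_lt (haε : a < ε) : Ioi a ∩ Ici ε = Ici ε :=
  inter_eq_right.mpr fun _ hv => haε.trans_le hv

theorem integrableOn_Ioi_mul_ite_le (haε : a < ε) (hh : IntegrableOn h (Ioi ε)) :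
    IntegrableOn (fun v => h v * if ε ≤ v then 1 else 0) (Ioi a) := by
  rw [mul_ite_le_eq_indicator, IntegrableOn, integrable_indicator_iff measurableSet_Ici,
    IntegrableOn, Measure.restrict_restrict measurableSet_Ici, inter_comm,
    Ioi_inter_Ici_of_lt haε]
  exact (integrableOn_Ici_iff_integrableOn_Ioi).mpr hh

theorem setIntegral_Ioi_mul_ite_le (haε : a < ε) :
    ∫ v in Ioi a, h v * (if ε ≤ v then 1 else 0) = ∫ v in Ioi ε, h v := by
  rw [mul_ite_le_eq_indicator, setIntegral_indicator measurableSet_Ici,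
    Ioi_inter_Ici_of_lt haε, integral_Ici_eq_integral_Ioi]

end Cutoff

/-- The bracket of the ε-BDY equation, with the rate `r[g]` replaced by an arbitrary constant `c`. -/
noncomputable def bdyCollision (ε c : ℝ) (g : ℝ → ℝ) (v : ℝ) : ℝ :=
  g (v + ε) - c * g v + (c * g (v - ε) - g v) * (if ε ≤ v then 1 else 0)

theorem integral_bdyCollision_eq_zero {ε : ℝ} (hε : 0 < ε) {g : ℝ → ℝ}
    (hg : IntegrableOn g (Ioi 0)) (c : ℝ) :
    ∫ v in Ioi 0, bdyCollision ε c g v = 0 := by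
  have hgε : IntegrableOn g (Ioi ε) := hg.mono_set (Ioi_subset_Ioi hε.le)
  have hup : IntegrableOn (fun v => g (v + ε)) (Ioi 0) :=
    (integrableOn_Ioi_comp_add_right_iff ε).mpr (by rwa [zero_add])
  have hdown : IntegrableOn (fun v => g (v - ε)) (Ioi ε) :=
    (integrableOn_Ioi_comp_sub_right_iff ε).mpr (by rwa [sub_self])
  have hloss : IntegrableOn (fun v => g (v + ε) - c * g v) (Ioi 0) := hup.sub (hg.const_mul c)
  have hcut : IntegrableOn (fun v => (c * g (v - ε) - g v) * if ε ≤ v then 1 else 0) (Ioi 0) :=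
    integrableOn_Ioi_mul_ite_le hε ((hdown.const_mul c).sub hgε)
  unfold bdyCollision
  rw [integral_add hloss hcut, integral_sub hup (hg.const_mul c),
    setIntegral_Ioi_mul_ite_le hε, integral_sub (hdown.const_mul c) hgε, integral_const_mul,
    integral_const_mul, integral_Ioi_comp_add_right, integral_Ioi_comp_sub_right, zero_add,
    sub_self]
  ring

theorem epsilon_BDY_mass_conservation_general
    (ε lam : ℝ) (hε : 0 < ε)
    (f ft : ℝ → ℝ → ℝ)
    (hint : ∀ t : ℝ, 0 ≤ t → IntegrableOn (fun v => f v t) (Ioi 0))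
    (hDUI : ∀ t : ℝ, 0 ≤ t →
      HasDerivAt (fun s => ∫ v in Ioi (0:ℝ), f v s) (∫ v in Ioi (0:ℝ), ft v t) t)
    (hPDE : ∀ v t : ℝ, 0 ≤ v → 0 ≤ t →
      ft v t = lam / 2 *
        (f (v + ε) t - (∫ w in Ioi ε, f w t) * f v t +
          ((∫ w in Ioi ε, f w t) * f (v - ε) t - f v t) * (if ε ≤ v then 1 else 0))) :
    ∀ t : ℝ, 0 ≤ t → deriv (fun s => ∫ v in Ioi (0:ℝ), f v s) t = 0 := by
  intro t ht
  rw [(hDUI t ht).deriv, setIntegral_congr_fun measurableSet_Ioi fun v hv => hPDE v t hv.le ht,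
    integral_const_mul]
  exact mul_eq_zero_of_right _ (integral_bdyCollision_eq_zero hε (hint t ht) _)

/-- **Mass conservation for the ε-BDY equation.**
If `f` is a nonnegative classical (C¹-in-time) solution of the ε-BDY equation
`∂_t f(v,t) = (λ/2)[ f(v+ε,t) − r[f](t) f(v,t) + ( r[f](t) f(v−ε,t) − f(v,t) ) 1_{v ≥ ε} ]`,
where `r[f](t) = ∫_ε^∞ f(v,t) dv`, with `f(·,t)` integrable for every `t` and such that
`t ↦ ∫₀^∞ f(v,t) dv` may be differentiated under the integral sign, then
`d/dt ∫₀^∞ f(v,t) dv = 0` for all `t ≥ 0`. -/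
theorem epsilon_BDY_mass_conservation
    (ε lam : ℝ) (hε : 0 < ε) (hlam : 0 < lam)
    (f ft : ℝ → ℝ → ℝ)
    (hcont : ContinuousOn (fun p : ℝ × ℝ => f p.1 p.2) (Ici 0 ×ˢ Ici 0))
    (hnonneg : ∀ v t : ℝ, 0 ≤ v → 0 ≤ t → 0 ≤ f v t)
    (hderiv_t : ∀ v t : ℝ, 0 ≤ v → 0 ≤ t → HasDerivAt (fun s => f v s) (ft v t) t)
    (hint : ∀ t : ℝ, 0 ≤ t → IntegrableOn (fun v => f v t) (Ioi 0))
    (hint_ft : ∀ t : ℝ, 0 ≤ t → IntegrableOn (fun v => ft v t) (Ioi 0))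
    (hDUI : ∀ t : ℝ, 0 ≤ t →
      HasDerivAt (fun s => ∫ v in Ioi (0:ℝ), f v s) (∫ v in Ioi (0:ℝ), ft v t) t)
    (hPDE : ∀ v t : ℝ, 0 ≤ v → 0 ≤ t →
      ft v t = lam / 2 *
        (f (v + ε) t - (∫ w in Ioi ε, f w t) * f v t +
          ((∫ w in Ioi ε, f w t) * f (v - ε) t - f v t) * (if ε ≤ v then 1 else 0))) :
    ∀ t : ℝ, 0 ≤ t → deriv (fun s => ∫ v in Ioi (0:ℝ), f v s) t = 0 :=
  epsilon_BDY_mass_conservation_general ε lam hε f ft hint hDUI hPDE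
end

section
/- Let f be a classical solution of the BDY PDE on [0,∞) × [0,∞) such that v ↦ v f(v,t) and v ↦ v ∂_vv f(v,t) are integrable for each t, ∫₀^∞ f(v,t) dv = 1 for all t ≥ 0, and v f(v,t), v ∂_v f(v,t) → 0 as v → ∞. Then d/dt ∫₀^∞ v f(v,t) dv = 0 for all t ≥ 0; in particular, the BDY PDE preserves the mean wealth. -/
open MeasureTheory Set Filter

/-! Differentiating under the integral sign and using the PDE,
`d/dt ∫ v f = ∫ v ∂_vv f + f(0,t) ∫ v ∂_v f`. Integrating by parts against the weight `v`,
whose boundary terms vanish at `0` because of the weight and at `∞` by the decay assumptions,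
`∫ v ∂_vv f = -∫ ∂_v f = f(0,t)` and `∫ v ∂_v f = -∫ f = -1`, so the two terms cancel. -/

lemma integral_Ioi_of_hasDerivAt_of_tendsto_zero {g g' : ℝ → ℝ}
    (hderiv : ∀ x ∈ Ici (0 : ℝ), HasDerivAt g (g' x) x) (hint : IntegrableOn g' (Ioi 0))
    (hdecay : Tendsto g atTop (nhds 0)) :
    ∫ x in Ioi (0 : ℝ), g' x = -g 0 := by
  rw [integral_Ioi_of_hasDerivAt_of_tendsto (hderiv 0 self_mem_Ici).continuousAt.continuousWithinAt
    (fun x hx => hderiv x (Ioi_subset_Ici_self hx)) hint hdecay, zero_sub]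

lemma integral_Ioi_mul_deriv_eq_neg_integral {g g' : ℝ → ℝ}
    (hderiv : ∀ x ∈ Ici (0 : ℝ), HasDerivAt g (g' x) x) (hint : IntegrableOn g (Ioi 0))
    (hint_mul : IntegrableOn (fun x => x * g' x) (Ioi 0))
    (hdecay : Tendsto (fun x => x * g x) atTop (nhds 0)) :
    ∫ x in Ioi (0 : ℝ), x * g' x = -∫ x in Ioi (0 : ℝ), g x := by
  have hprod : ∀ x ∈ Ici (0 : ℝ), HasDerivAt (fun x => x * g x) (g x + x * g' x) x := by
    intro x hx
    simpa only [one_mul] using (hasDerivAt_id' x).fun_mul (hderiv x hx)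
  have h := integral_Ioi_of_hasDerivAt_of_tendsto_zero hprod (hint.add hint_mul) hdecay
  rw [integral_add hint hint_mul, zero_mul, neg_zero] at h
  linarith

theorem BDY_PDE_mean_conservation_general
    (f ft fv fvv : ℝ → ℝ → ℝ)
    (hfv : ∀ v t : ℝ, 0 ≤ v → 0 ≤ t → HasDerivAt (fun w => f w t) (fv v t) v)
    (hfvv : ∀ v t : ℝ, 0 ≤ v → 0 ≤ t → HasDerivAt (fun w => fv w t) (fvv v t) v)
    (hint : ∀ t : ℝ, 0 ≤ t → IntegrableOn (fun v => f v t) (Ioi 0))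
    (hint_fv : ∀ t : ℝ, 0 ≤ t → IntegrableOn (fun v => fv v t) (Ioi 0))
    (hint_vfvv : ∀ t : ℝ, 0 ≤ t → IntegrableOn (fun v => v * fvv v t) (Ioi 0))
    (hmass : ∀ t : ℝ, 0 ≤ t → ∫ v in Ioi (0:ℝ), f v t = 1)
    (hdecay : ∀ t : ℝ, 0 ≤ t → Tendsto (fun v => f v t) atTop (nhds 0))
    (hdecay_vf : ∀ t : ℝ, 0 ≤ t → Tendsto (fun v => v * f v t) atTop (nhds 0))
    (hdecay_vfv : ∀ t : ℝ, 0 ≤ t → Tendsto (fun v => v * fv v t) atTop (nhds 0))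
    (hPDE : ∀ v t : ℝ, 0 < v → 0 ≤ t → ft v t = fvv v t + f 0 t * fv v t)
    (hDUI : ∀ t : ℝ, 0 ≤ t →
      HasDerivAt (fun s => ∫ v in Ioi (0:ℝ), v * f v s)
        (∫ v in Ioi (0:ℝ), v * ft v t) t) :
    ∀ t : ℝ, 0 ≤ t → deriv (fun s => ∫ v in Ioi (0:ℝ), v * f v s) t = 0 := by
  intro t ht
  rw [(hDUI t ht).deriv]
  by_cases hint_vft : IntegrableOn (fun v => v * ft v t) (Ioi 0)
  swap
  · exact integral_undef hint_vft
  have hsplit : ∀ v ∈ Ioi (0 : ℝ), v * ft v t = v * fvv v t + v * (f 0 t * fv v t) := by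
    intro v hv
    rw [hPDE v t hv ht, mul_add]
  have hint_drift : IntegrableOn (fun v => v * (f 0 t * fv v t)) (Ioi 0) :=
    (hint_vft.sub (hint_vfvv t ht)).congr_fun
      (fun v hv => by simp only [Pi.sub_apply, hsplit v hv, add_sub_cancel_left]) measurableSet_Ioi
  have hdiffusion : ∫ v in Ioi (0 : ℝ), v * fvv v t = f 0 t := by
    rw [integral_Ioi_mul_deriv_eq_neg_integral (fun v hv => hfvv v t hv ht) (hint_fv t ht)
      (hint_vfvv t ht) (hdecay_vfv t ht),
      integral_Ioi_of_hasDerivAt_of_tendsto_zero (fun v hv => hfv v t hv ht) (hint_fv t ht)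
        (hdecay t ht), neg_neg]
  have hdrift : ∫ v in Ioi (0 : ℝ), v * (f 0 t * fv v t) = -f 0 t := by
    have hdecay_drift : Tendsto (fun v => v * (f 0 t * f v t)) atTop (nhds 0) := by
      simpa only [mul_left_comm, mul_zero] using (hdecay_vf t ht).const_mul (f 0 t)
    rw [integral_Ioi_mul_deriv_eq_neg_integral (fun v hv => (hfv v t hv ht).const_mul (f 0 t))
      ((hint t ht).const_mul _) hint_drift hdecay_drift, integral_const_mul, hmass t ht, mul_one]
  calc ∫ v in Ioi (0 : ℝ), v * ft v t
      = ∫ v in Ioi (0 : ℝ), (v * fvv v t + v * (f 0 t * fv v t)) :=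
        setIntegral_congr_fun measurableSet_Ioi hsplit
    _ = 0 := by rw [integral_add (hint_vfvv t ht) hint_drift, hdiffusion, hdrift, add_neg_cancel]

/-- **Mean-wealth conservation for the BDY PDE.**
Let `f` be a classical solution of the BDY PDE
`∂_t f = ∂_vv f + f(0,t) ∂_v f` on `(0,∞)` with the nonlinear Robin boundary condition
`∂_v f(0,t) + f(0,t)² = 0`, such that `v ↦ v f(v,t)` and `v ↦ v ∂_vv f(v,t)` are integrable
for each `t`, `∫₀^∞ f(v,t) dv = 1` for all `t ≥ 0`, `v f(v,t) → 0` and `v ∂_v f(v,t) → 0`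
as `v → ∞`, and such that `t ↦ ∫₀^∞ v f(v,t) dv` may be differentiated under the integral
sign. Then `d/dt ∫₀^∞ v f(v,t) dv = 0` for all `t ≥ 0`. -/
theorem BDY_PDE_mean_conservation
    (f ft fv fvv : ℝ → ℝ → ℝ)
    (hcont : ContinuousOn (fun p : ℝ × ℝ => f p.1 p.2) (Ici 0 ×ˢ Ici 0))
    (hfv : ∀ v t : ℝ, 0 ≤ v → 0 ≤ t → HasDerivAt (fun w => f w t) (fv v t) v)
    (hfvv : ∀ v t : ℝ, 0 ≤ v → 0 ≤ t → HasDerivAt (fun w => fv w t) (fvv v t) v)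
    (hft : ∀ v t : ℝ, 0 ≤ v → 0 ≤ t → HasDerivAt (fun s => f v s) (ft v t) t)
    (hint : ∀ t : ℝ, 0 ≤ t → IntegrableOn (fun v => f v t) (Ioi 0))
    (hint_fv : ∀ t : ℝ, 0 ≤ t → IntegrableOn (fun v => fv v t) (Ioi 0))
    (hint_fvv : ∀ t : ℝ, 0 ≤ t → IntegrableOn (fun v => fvv v t) (Ioi 0))
    (hint_vf : ∀ t : ℝ, 0 ≤ t → IntegrableOn (fun v => v * f v t) (Ioi 0))
    (hint_vfvv : ∀ t : ℝ, 0 ≤ t → IntegrableOn (fun v => v * fvv v t) (Ioi 0))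
    (hmass : ∀ t : ℝ, 0 ≤ t → ∫ v in Ioi (0:ℝ), f v t = 1)
    (hdecay : ∀ t : ℝ, 0 ≤ t → Tendsto (fun v => f v t) atTop (nhds 0))
    (hdecay_fv : ∀ t : ℝ, 0 ≤ t → Tendsto (fun v => fv v t) atTop (nhds 0))
    (hdecay_vf : ∀ t : ℝ, 0 ≤ t → Tendsto (fun v => v * f v t) atTop (nhds 0))
    (hdecay_vfv : ∀ t : ℝ, 0 ≤ t → Tendsto (fun v => v * fv v t) atTop (nhds 0))
    (hPDE : ∀ v t : ℝ, 0 < v → 0 ≤ t → ft v t = fvv v t + f 0 t * fv v t)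
    (hBC : ∀ t : ℝ, 0 ≤ t → fv 0 t + (f 0 t) ^ 2 = 0)
    (hDUI : ∀ t : ℝ, 0 ≤ t →
      HasDerivAt (fun s => ∫ v in Ioi (0:ℝ), v * f v s)
        (∫ v in Ioi (0:ℝ), v * ft v t) t) :
    ∀ t : ℝ, 0 ≤ t → deriv (fun s => ∫ v in Ioi (0:ℝ), v * f v s) t = 0 :=
  BDY_PDE_mean_conservation_general f ft fv fvv hfv hfvv hint hint_fv hint_vfvv hmass hdecay
    hdecay_vf hdecay_vfv hPDE hDUI
end

section
/- Let μ > 0 and let g : [0,∞) → ℝ be a C² function which is nonnegative, integrable with ∫₀^∞ g(v) dv = 1 and ∫₀^∞ v g(v) dv = μ, and which satisfies the stationary BDY equation g''(v) + g(0) g'(v) = 0 for all v ≥ 0 together with the Robin boundary condition g'(0) + g(0)² = 0. Then g(v) = (1/μ) e^{−v/μ} for all v ≥ 0; i.e. the Boltzmann–Gibbs density with mean μ is the unique equilibrium of the BDY PDE among probability densities with mean μ. -/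
open MeasureTheory Set

/-!
Integrating the stationary equation once and using the Robin condition gives `g' = -g(0) g`
on `[0, ∞)`, so `g(v) = g(0) e^{-g(0) v}`. Unit mass and nonnegativity force `g(0) > 0`, and the
mean of this exponential density is `1 / g(0)`, so `g(0) = 1 / μ`.
-/

theorem eq_of_hasDerivAt_zero_of_le {E : Type*} [NormedAddCommGroup E] [NormedSpace ℝ E]
    {f : ℝ → E} {x₀ : ℝ} (hf : ∀ x, x₀ ≤ x → HasDerivAt f 0 x) {x : ℝ} (hx : x₀ ≤ x) :
    f x = f x₀ :=
  constant_of_has_deriv_right_zero (fun y hy => (hf y hy.1).continuousAt.continuousWithinAt)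
    (fun y hy => (hf y hy.1).hasDerivWithinAt) x ⟨hx, le_rfl⟩

theorem eq_mul_exp_of_hasDerivAt_eq_neg_mul {y : ℝ → ℝ} {a : ℝ}
    (hy : ∀ v, 0 ≤ v → HasDerivAt y (-(a * y v)) v) {v : ℝ} (hv : 0 ≤ v) :
    y v = y 0 * Real.exp (-(a * v)) := by
  have hconst : y v * Real.exp (a * v) = y 0 * Real.exp (a * 0) := by
    refine eq_of_hasDerivAt_zero_of_le (f := fun v => y v * Real.exp (a * v)) (fun w hw => ?_) hv
    have hexp : HasDerivAt (fun v => Real.exp (a * v)) (Real.exp (a * w) * a) w :=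
      ((hasDerivAt_id w).const_mul a).exp.congr_deriv (by simp)
    exact ((hy w hw).mul hexp).congr_deriv (by ring)
  rw [mul_zero, Real.exp_zero, mul_one] at hconst
  rw [← hconst, Real.exp_neg, mul_inv_cancel_right₀ (Real.exp_ne_zero _)]

theorem integral_Ioi_mul_exp_neg_mul {r : ℝ} (hr : 0 < r) :
    ∫ t in Ioi (0 : ℝ), t * Real.exp (-(r * t)) = 1 / r ^ 2 := by
  have h := Real.integral_rpow_mul_exp_neg_mul_Ioi two_pos hr
  norm_num [Real.Gamma_two] at h
  rw [h, one_div]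

theorem BDY_stationary_eq_mul_exp {g g' g'' : ℝ → ℝ}
    (hg' : ∀ v : ℝ, 0 ≤ v → HasDerivAt g (g' v) v)
    (hg'' : ∀ v : ℝ, 0 ≤ v → HasDerivAt g' (g'' v) v)
    (hODE : ∀ v : ℝ, 0 ≤ v → g'' v + g 0 * g' v = 0)
    (hBC : g' 0 + (g 0) ^ 2 = 0) {v : ℝ} (hv : 0 ≤ v) :
    g v = g 0 * Real.exp (-(g 0 * v)) := by
  have hflux : ∀ w, 0 ≤ w → g' w + g 0 * g w = 0 := fun w hw => by
    have hderiv : ∀ x, 0 ≤ x → HasDerivAt (fun x => g' x + g 0 * g x) 0 x := fun x hx =>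
      ((hg'' x hx).add ((hg' x hx).const_mul (g 0))).congr_deriv (hODE x hx)
    linear_combination eq_of_hasDerivAt_zero_of_le hderiv hw + hBC
  refine eq_mul_exp_of_hasDerivAt_eq_neg_mul (fun w hw => ?_) hv
  exact (hg' w hw).congr_deriv (by linarith [hflux w hw])

theorem BDY_PDE_equilibrium_unique_general
    (μ : ℝ)
    (g g' g'' : ℝ → ℝ)
    (hg' : ∀ v : ℝ, 0 ≤ v → HasDerivAt g (g' v) v)
    (hg'' : ∀ v : ℝ, 0 ≤ v → HasDerivAt g' (g'' v) v)
    (hnonneg : ∀ v : ℝ, 0 ≤ v → 0 ≤ g v)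
    (hmass : ∫ v in Ioi (0:ℝ), g v = 1)
    (hmean : ∫ v in Ioi (0:ℝ), v * g v = μ)
    (hODE : ∀ v : ℝ, 0 ≤ v → g'' v + g 0 * g' v = 0)
    (hBC : g' 0 + (g 0) ^ 2 = 0) :
    ∀ v : ℝ, 0 ≤ v → g v = (1 / μ) * Real.exp (-v / μ) := by
  have hexp := fun v (hv : 0 ≤ v) => BDY_stationary_eq_mul_exp hg' hg'' hODE hBC hv
  have ha_nonneg := hnonneg 0 le_rfl
  generalize g 0 = a at hexp ha_nonneg
  have ha : 0 < a := by
    refine ha_nonneg.lt_of_ne fun ha0 => ?_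
    have : ∫ v in Ioi (0:ℝ), g v = 0 := by
      rw [setIntegral_congr_fun measurableSet_Ioi fun v hv => by rw [hexp v hv.le, ← ha0, zero_mul]]
      exact integral_zero _ _
    linarith
  have hμa : μ = 1 / a := by
    rw [← hmean, setIntegral_congr_fun measurableSet_Ioi fun v hv => by
      rw [hexp v hv.le, mul_left_comm], integral_const_mul, integral_Ioi_mul_exp_neg_mul ha]
    field_simp
  intro v hv
  rw [hexp v hv, hμa, one_div_one_div]
  congr 2
  field_simp

/-- **Uniqueness of the equilibrium of the BDY PDE.**
Let `μ > 0` and let `g` be a C² nonnegative function on `[0,∞)` which is a probability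
density with mean `μ` and satisfies the stationary BDY equation
`g''(v) + g(0) g'(v) = 0` for all `v ≥ 0` together with the Robin boundary condition
`g'(0) + g(0)² = 0`. Then `g(v) = (1/μ) e^{−v/μ}` for all `v ≥ 0`: the Boltzmann–Gibbs
density with mean `μ` is the unique equilibrium of the BDY PDE among probability densities
with mean `μ`. -/
theorem BDY_PDE_equilibrium_unique
    (μ : ℝ) (hμ : 0 < μ)
    (g g' g'' : ℝ → ℝ)
    (hg' : ∀ v : ℝ, 0 ≤ v → HasDerivAt g (g' v) v)
    (hg'' : ∀ v : ℝ, 0 ≤ v → HasDerivAt g' (g'' v) v)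
    (hcont : ContinuousOn g'' (Ici 0))
    (hnonneg : ∀ v : ℝ, 0 ≤ v → 0 ≤ g v)
    (hint : IntegrableOn g (Ioi 0))
    (hint1 : IntegrableOn (fun v => v * g v) (Ioi 0))
    (hmass : ∫ v in Ioi (0:ℝ), g v = 1)
    (hmean : ∫ v in Ioi (0:ℝ), v * g v = μ)
    (hODE : ∀ v : ℝ, 0 ≤ v → g'' v + g 0 * g' v = 0)
    (hBC : g' 0 + (g 0) ^ 2 = 0) :
    ∀ v : ℝ, 0 ≤ v → g v = (1 / μ) * Real.exp (-v / μ) :=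
  BDY_PDE_equilibrium_unique_general μ g g' g'' hg' hg'' hnonneg hmass hmean hODE hBC
end

section
/- Let μ > 0 and let f be a classical solution of the BDY PDE on [0,∞) × [0,∞) with ∫₀^∞ f(v,t) dv = 1 and ∫₀^∞ v f(v,t) dv = μ for all t ≥ 0, such that v² f(v,t), v² ∂_v f(v,t), v f(v,t) → 0 as v → ∞ and v ↦ v² f(v,t), v² ∂_vv f(v,t) are integrable for each t. Then d/dt ∫₀^∞ v² f(v,t) dv = 2 ( 1 − μ f(0,t) ) for all t ≥ 0. -/
/-!
Substituting the equation, the time derivative of the second moment is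
`∫ v² ∂_vv f + f(0,t) ∫ v² ∂_v f`. Integrating by parts against the antiderivatives
`v² ∂_v f − 2 v f` and `v² f`, whose boundary terms vanish at `0` and at `∞`, gives
`∫ v² ∂_vv f = 2 ∫ f = 2` and `∫ v² ∂_v f = −2 ∫ v f = −2μ`.

The analytic point is that `v² ∂_v f` is integrable. Taylor's formula on `[v, v + 1]` bounds
`v² |∂_v f(v)|` by `(v+1)² |f(v+1)| + v² |f(v)| + ∫_v^{v+1} w² |∂_ww f(w)| dw`, and the last
term is integrable in `v`, being the convolution of `w² |∂_ww f|` with the indicator of `[-1, 0)`.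
-/

open MeasureTheory Set Filter Topology

theorem integrable_integral_Ioc_add {g : ℝ → ℝ} (hg : Integrable g) (c : ℝ) :
    Integrable fun x => ∫ s in Ioc x (x + c), g s := by
  have hχ : Integrable ((Ico (-c) 0).indicator fun _ => (1 : ℝ)) :=
    (integrable_indicator_iff measurableSet_Ico).2 (integrableOn_const (by simp))
  convert hg.integrable_convolution (ContinuousLinearMap.mul ℝ ℝ) hχ using 1
  ext x
  rw [convolution_def, ← integral_indicator measurableSet_Ioc]
  congr 1 with s
  by_cases hs : s ∈ Ioc x (x + c)
  · have : x - s ∈ Ico (-c) 0 := ⟨by linarith [hs.2], by linarith [hs.1]⟩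
    simp [hs, this]
  · have : x - s ∉ Ico (-c) 0 := fun h => hs ⟨by linarith [h.2], by linarith [h.1]⟩
    simp [hs, this]

theorem eq_sub_sub_intervalIntegral_of_hasDerivAt {F F' F'' : ℝ → ℝ} {x : ℝ}
    (hF : ∀ s ∈ Icc x (x + 1), HasDerivAt F (F' s) s)
    (hF' : ∀ s ∈ Icc x (x + 1), HasDerivAt F' (F'' s) s)
    (hF'' : IntegrableOn F'' (Icc x (x + 1))) :
    F' x = F (x + 1) - F x - ∫ s in x..x + 1, (x + 1 - s) * F'' s := by
  have hx : x ≤ x + 1 := by linarith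
  have hint : IntervalIntegrable (fun s => (x + 1 - s) * F'' s) volume x (x + 1) :=
    (intervalIntegrable_iff_integrableOn_Ioc_of_le hx).2
      ((hF''.continuousOn_mul (by fun_prop) isCompact_Icc).mono_set Ioc_subset_Icc_self)
  have hderiv : ∀ s ∈ uIcc x (x + 1), HasDerivAt (fun s => (x + 1 - s) * F' s + F s)
      ((x + 1 - s) * F'' s) s := by
    intro s hs
    rw [uIcc_of_le hx] at hs
    have hlin : HasDerivAt (fun s => x + 1 - s) (-1) s := by
      simpa using (hasDerivAt_id s).const_sub (x + 1)
    exact ((hlin.fun_mul (hF' s hs)).fun_add (hF s hs)).congr_deriv (by ring)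
  rw [intervalIntegral.integral_eq_sub_of_hasDerivAt hderiv hint]
  ring

theorem mul_abs_le_of_hasDerivAt {w F F' F'' : ℝ → ℝ} {x : ℝ}
    (hw_mono : MonotoneOn w (Icc x (x + 1))) (hw_nonneg : 0 ≤ w x)
    (hF : ∀ s ∈ Icc x (x + 1), HasDerivAt F (F' s) s)
    (hF' : ∀ s ∈ Icc x (x + 1), HasDerivAt F' (F'' s) s)
    (hF'' : IntegrableOn F'' (Icc x (x + 1)))
    (hwF'' : IntegrableOn (fun s => w s * F'' s) (Icc x (x + 1))) :
    w x * |F' x| ≤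
      |w (x + 1) * F (x + 1)| + |w x * F x| + ∫ s in Ioc x (x + 1), |w s * F'' s| := by
  have hx : x ≤ x + 1 := by linarith
  have hw_le : w x ≤ w (x + 1) := hw_mono (left_mem_Icc.2 hx) (right_mem_Icc.2 hx) hx
  have hremainder : w x * |∫ s in x..x + 1, (x + 1 - s) * F'' s| ≤
      ∫ s in Ioc x (x + 1), |w s * F'' s| := by
    rw [intervalIntegral.integral_of_le hx, ← abs_of_nonneg hw_nonneg, ← abs_mul,
      ← integral_const_mul, ← Real.norm_eq_abs]
    refine norm_integral_le_of_norm_le (hwF''.mono_set Ioc_subset_Icc_self).abs ?_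
    filter_upwards [ae_restrict_mem measurableSet_Ioc] with s hs
    have hws : w x ≤ w s :=
      hw_mono (left_mem_Icc.2 hx) (Ioc_subset_Icc_self hs) hs.1.le
    have h0 : 0 ≤ x + 1 - s := by linarith [hs.2]
    have h1 : x + 1 - s ≤ 1 := by linarith [hs.1]
    rw [Real.norm_eq_abs, ← mul_assoc, abs_mul, abs_mul (w s),
      abs_of_nonneg (mul_nonneg hw_nonneg h0), abs_of_nonneg (hw_nonneg.trans hws)]
    gcongr
    nlinarith
  rw [eq_sub_sub_intervalIntegral_of_hasDerivAt hF hF' hF'', abs_mul, abs_mul,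
    abs_of_nonneg hw_nonneg, abs_of_nonneg (hw_nonneg.trans hw_le)]
  calc w x * |F (x + 1) - F x - ∫ s in x..x + 1, (x + 1 - s) * F'' s|
      ≤ w x * (|F (x + 1)| + |F x| + |∫ s in x..x + 1, (x + 1 - s) * F'' s|) := by
        gcongr
        exact (abs_sub _ _).trans (add_le_add_left (abs_sub _ _) _)
    _ ≤ w (x + 1) * |F (x + 1)| + w x * |F x| + ∫ s in Ioc x (x + 1), |w s * F'' s| := by
        rw [mul_add, mul_add]
        gcongr

theorem integrableOn_Ioi_mul_deriv {w F F' F'' : ℝ → ℝ} {a : ℝ}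
    (hw_mono : MonotoneOn w (Ioi a)) (hw_nonneg : ∀ x ∈ Ioi a, 0 ≤ w x)
    (hF : ∀ x ∈ Ioi a, HasDerivAt F (F' x) x)
    (hF' : ∀ x ∈ Ioi a, HasDerivAt F' (F'' x) x)
    (hwF : IntegrableOn (fun x => w x * F x) (Ioi a))
    (hF'' : LocallyIntegrableOn F'' (Ioi a))
    (hwF'' : IntegrableOn (fun x => w x * F'' x) (Ioi a)) :
    IntegrableOn (fun x => w x * F' x) (Ioi a) := by
  have hshift : IntegrableOn (fun x => w (x + 1) * F (x + 1)) (Ioi a) := by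
    have := (measurePreserving_add_right volume (1 : ℝ)).integrableOn_comp_preimage
      (measurableEmbedding_addRight 1) (f := fun x => w x * F x) (s := Ioi (a + 1))
    rw [preimage_add_const_Ioi, add_sub_cancel_right] at this
    exact this.2 (hwF.mono_set (Ioi_subset_Ioi (by linarith)))
  have hwindow : Integrable fun x => ∫ s in Ioc x (x + 1), (Ioi a).indicator
      (fun s => |w s * F'' s|) s :=
    integrable_integral_Ioc_add ((integrable_indicator_iff measurableSet_Ioi).2 hwF''.abs) 1
  refine Integrable.mono' (hshift.abs.add hwF.abs |>.add hwindow.integrableOn) ?_ ?_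
  · exact (aemeasurable_restrict_of_monotoneOn measurableSet_Ioi hw_mono).aestronglyMeasurable.mul
      (ContinuousOn.aestronglyMeasurable (fun x hx => (hF' x hx).continuousAt.continuousWithinAt)
        measurableSet_Ioi)
  · filter_upwards [ae_restrict_mem measurableSet_Ioi] with x hx
    have hsub : Icc x (x + 1) ⊆ Ioi a := fun s hs => lt_of_lt_of_le hx hs.1
    have hind : ∫ s in Ioc x (x + 1), (Ioi a).indicator (fun s => |w s * F'' s|) s =
        ∫ s in Ioc x (x + 1), |w s * F'' s| :=
      setIntegral_congr_fun measurableSet_Ioc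
        fun s hs => indicator_of_mem (hsub (Ioc_subset_Icc_self hs)) _
    rw [Real.norm_eq_abs, abs_mul, abs_of_nonneg (hw_nonneg x hx), Pi.add_apply, Pi.add_apply,
      hind]
    exact mul_abs_le_of_hasDerivAt (hw_mono.mono hsub) (hw_nonneg x hx)
      (fun s hs => hF s (hsub hs)) (fun s hs => hF' s (hsub hs))
      (hF''.integrableOn_compact_subset hsub isCompact_Icc)
      (hwF''.mono_set hsub)

theorem integral_Ioi_sq_mul_deriv {g g' : ℝ → ℝ}
    (hg : ∀ x ∈ Ici 0, HasDerivAt g (g' x) x)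
    (hx2g' : IntegrableOn (fun x => x ^ 2 * g' x) (Ioi 0))
    (hxg : IntegrableOn (fun x => x * g x) (Ioi 0))
    (hlim : Tendsto (fun x => x ^ 2 * g x) atTop (𝓝 0)) :
    ∫ x in Ioi 0, x ^ 2 * g' x = -2 * ∫ x in Ioi 0, x * g x := by
  have hderiv : ∀ x ∈ Ici (0 : ℝ), HasDerivAt (fun x => x ^ 2 * g x)
      (x ^ 2 * g' x + 2 * (x * g x)) x := fun x hx =>
    ((hasDerivAt_pow 2 x).fun_mul (hg x hx)).congr_deriv (by ring)
  have h := integral_Ioi_of_hasDerivAt_of_tendsto' hderiv (hx2g'.add (hxg.const_mul 2)) hlim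
  rw [integral_add hx2g' (hxg.const_mul 2), integral_const_mul] at h
  simp only [ne_eq, OfNat.ofNat_ne_zero, not_false_eq_true, zero_pow, zero_mul] at h
  linarith

theorem integral_Ioi_sq_mul_deriv_deriv {F F' F'' : ℝ → ℝ}
    (hF : ∀ x ∈ Ici 0, HasDerivAt F (F' x) x)
    (hF' : ∀ x ∈ Ici 0, HasDerivAt F' (F'' x) x)
    (hx2F'' : IntegrableOn (fun x => x ^ 2 * F'' x) (Ioi 0))
    (hFint : IntegrableOn F (Ioi 0))
    (hlim' : Tendsto (fun x => x ^ 2 * F' x) atTop (𝓝 0))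
    (hlim : Tendsto (fun x => x * F x) atTop (𝓝 0)) :
    ∫ x in Ioi 0, x ^ 2 * F'' x = 2 * ∫ x in Ioi 0, F x := by
  have hderiv : ∀ x ∈ Ici (0 : ℝ), HasDerivAt (fun x => x ^ 2 * F' x - 2 * (x * F x))
      (x ^ 2 * F'' x - 2 * F x) x := fun x hx =>
    (((hasDerivAt_pow 2 x).fun_mul (hF' x hx)).fun_sub
      (((hasDerivAt_id' x).fun_mul (hF x hx)).const_mul 2)).congr_deriv (by ring)
  have h := integral_Ioi_of_hasDerivAt_of_tendsto' hderiv (hx2F''.sub (hFint.const_mul 2))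
    (by simpa using hlim'.sub (hlim.const_mul 2))
  rw [integral_sub hx2F'' (hFint.const_mul 2), integral_const_mul] at h
  simp only [ne_eq, OfNat.ofNat_ne_zero, not_false_eq_true, zero_pow, zero_mul] at h
  linarith

theorem BDY_PDE_second_moment_general
    (μ : ℝ)
    (f ft fv fvv : ℝ → ℝ → ℝ)
    (hfv : ∀ v t : ℝ, 0 ≤ v → 0 ≤ t → HasDerivAt (fun w => f w t) (fv v t) v)
    (hfvv : ∀ v t : ℝ, 0 ≤ v → 0 ≤ t → HasDerivAt (fun w => fv w t) (fvv v t) v)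
    (hint : ∀ t : ℝ, 0 ≤ t → IntegrableOn (fun v => f v t) (Ioi 0))
    (hint_fvv : ∀ t : ℝ, 0 ≤ t → IntegrableOn (fun v => fvv v t) (Ioi 0))
    (hint_vf : ∀ t : ℝ, 0 ≤ t → IntegrableOn (fun v => v * f v t) (Ioi 0))
    (hint_v2f : ∀ t : ℝ, 0 ≤ t → IntegrableOn (fun v => v ^ 2 * f v t) (Ioi 0))
    (hint_v2fvv : ∀ t : ℝ, 0 ≤ t → IntegrableOn (fun v => v ^ 2 * fvv v t) (Ioi 0))
    (hmass : ∀ t : ℝ, 0 ≤ t → ∫ v in Ioi (0:ℝ), f v t = 1)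
    (hmean : ∀ t : ℝ, 0 ≤ t → ∫ v in Ioi (0:ℝ), v * f v t = μ)
    (hdecay_v2f : ∀ t : ℝ, 0 ≤ t → Tendsto (fun v => v ^ 2 * f v t) atTop (nhds 0))
    (hdecay_v2fv : ∀ t : ℝ, 0 ≤ t → Tendsto (fun v => v ^ 2 * fv v t) atTop (nhds 0))
    (hdecay_vf : ∀ t : ℝ, 0 ≤ t → Tendsto (fun v => v * f v t) atTop (nhds 0))
    (hPDE : ∀ v t : ℝ, 0 < v → 0 ≤ t → ft v t = fvv v t + f 0 t * fv v t)
    (hDUI : ∀ t : ℝ, 0 ≤ t →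
      HasDerivAt (fun s => ∫ v in Ioi (0:ℝ), v ^ 2 * f v s)
        (∫ v in Ioi (0:ℝ), v ^ 2 * ft v t) t) :
    ∀ t : ℝ, 0 ≤ t →
      deriv (fun s => ∫ v in Ioi (0:ℝ), v ^ 2 * f v s) t = 2 * (1 - μ * f 0 t) := by
  intro t ht
  have hv2fv : IntegrableOn (fun v => v ^ 2 * fv v t) (Ioi 0) :=
    integrableOn_Ioi_mul_deriv (fun x hx y _ hxy => pow_le_pow_left₀ (le_of_lt hx) hxy 2)
      (fun x _ => sq_nonneg x) (fun v hv => hfv v t (le_of_lt hv) ht)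
      (fun v hv => hfvv v t (le_of_lt hv) ht) (hint_v2f t ht)
      (hint_fvv t ht).locallyIntegrableOn (hint_v2fvv t ht)
  have hv2fvv_integral : ∫ v in Ioi (0:ℝ), v ^ 2 * fvv v t = 2 := by
    rw [integral_Ioi_sq_mul_deriv_deriv (fun v hv => hfv v t hv ht) (fun v hv => hfvv v t hv ht)
      (hint_v2fvv t ht) (hint t ht) (hdecay_v2fv t ht) (hdecay_vf t ht), hmass t ht, mul_one]
  have hv2fv_integral : ∫ v in Ioi (0:ℝ), v ^ 2 * fv v t = -2 * μ := by
    rw [integral_Ioi_sq_mul_deriv (fun v hv => hfv v t hv ht) hv2fv (hint_vf t ht)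
      (hdecay_v2f t ht), hmean t ht]
  have hv2ft_integral : ∫ v in Ioi (0:ℝ), v ^ 2 * ft v t =
      (∫ v in Ioi (0:ℝ), v ^ 2 * fvv v t) + f 0 t * ∫ v in Ioi (0:ℝ), v ^ 2 * fv v t := by
    rw [← integral_const_mul, ← integral_add (hint_v2fvv t ht) (hv2fv.const_mul _)]
    exact setIntegral_congr_fun measurableSet_Ioi fun v hv => by
      rw [hPDE v t hv ht]; ring
  rw [(hDUI t ht).deriv, hv2ft_integral, hv2fvv_integral, hv2fv_integral]
  ring

/-- **Evolution of the second moment for the BDY PDE.**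
Let `μ > 0` and let `f` be a classical solution of the BDY PDE
`∂_t f = ∂_vv f + f(0,t) ∂_v f` with Robin boundary condition `∂_v f(0,t) + f(0,t)² = 0`,
which is for every `t` a probability density with mean `μ`, such that
`v² f(v,t), v² ∂_v f(v,t), v f(v,t) → 0` as `v → ∞`, `v ↦ v² f(v,t)` and
`v ↦ v² ∂_vv f(v,t)` are integrable for each `t`, and the second moment may be
differentiated in time under the integral sign. Then
`d/dt ∫₀^∞ v² f(v,t) dv = 2 (1 − μ f(0,t))` for all `t ≥ 0`. -/
theorem BDY_PDE_second_moment
    (μ : ℝ) (hμ : 0 < μ)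
    (f ft fv fvv : ℝ → ℝ → ℝ)
    (hcont : ContinuousOn (fun p : ℝ × ℝ => f p.1 p.2) (Ici 0 ×ˢ Ici 0))
    (hfv : ∀ v t : ℝ, 0 ≤ v → 0 ≤ t → HasDerivAt (fun w => f w t) (fv v t) v)
    (hfvv : ∀ v t : ℝ, 0 ≤ v → 0 ≤ t → HasDerivAt (fun w => fv w t) (fvv v t) v)
    (hft : ∀ v t : ℝ, 0 ≤ v → 0 ≤ t → HasDerivAt (fun s => f v s) (ft v t) t)
    (hint : ∀ t : ℝ, 0 ≤ t → IntegrableOn (fun v => f v t) (Ioi 0))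
    (hint_fv : ∀ t : ℝ, 0 ≤ t → IntegrableOn (fun v => fv v t) (Ioi 0))
    (hint_fvv : ∀ t : ℝ, 0 ≤ t → IntegrableOn (fun v => fvv v t) (Ioi 0))
    (hint_vf : ∀ t : ℝ, 0 ≤ t → IntegrableOn (fun v => v * f v t) (Ioi 0))
    (hint_v2f : ∀ t : ℝ, 0 ≤ t → IntegrableOn (fun v => v ^ 2 * f v t) (Ioi 0))
    (hint_v2fvv : ∀ t : ℝ, 0 ≤ t → IntegrableOn (fun v => v ^ 2 * fvv v t) (Ioi 0))
    (hmass : ∀ t : ℝ, 0 ≤ t → ∫ v in Ioi (0:ℝ), f v t = 1)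
    (hmean : ∀ t : ℝ, 0 ≤ t → ∫ v in Ioi (0:ℝ), v * f v t = μ)
    (hdecay : ∀ t : ℝ, 0 ≤ t → Tendsto (fun v => f v t) atTop (nhds 0))
    (hdecay_fv : ∀ t : ℝ, 0 ≤ t → Tendsto (fun v => fv v t) atTop (nhds 0))
    (hdecay_v2f : ∀ t : ℝ, 0 ≤ t → Tendsto (fun v => v ^ 2 * f v t) atTop (nhds 0))
    (hdecay_v2fv : ∀ t : ℝ, 0 ≤ t → Tendsto (fun v => v ^ 2 * fv v t) atTop (nhds 0))
    (hdecay_vf : ∀ t : ℝ, 0 ≤ t → Tendsto (fun v => v * f v t) atTop (nhds 0))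
    (hPDE : ∀ v t : ℝ, 0 < v → 0 ≤ t → ft v t = fvv v t + f 0 t * fv v t)
    (hBC : ∀ t : ℝ, 0 ≤ t → fv 0 t + (f 0 t) ^ 2 = 0)
    (hDUI : ∀ t : ℝ, 0 ≤ t →
      HasDerivAt (fun s => ∫ v in Ioi (0:ℝ), v ^ 2 * f v s)
        (∫ v in Ioi (0:ℝ), v ^ 2 * ft v t) t) :
    ∀ t : ℝ, 0 ≤ t →
      deriv (fun s => ∫ v in Ioi (0:ℝ), v ^ 2 * f v s) t = 2 * (1 - μ * f 0 t) :=
  BDY_PDE_second_moment_general μ f ft fv fvv hfv hfvv hint hint_fvv hint_vf hint_v2f hint_v2fvv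
    hmass hmean hdecay_v2f hdecay_v2fv hdecay_vf hPDE hDUI
end

section
/- Let μ > 0 and let f be a classical solution of the BDY PDE on [0,∞) × [0,∞) with ∫₀^∞ f(v,t) dv = 1 and ∫₀^∞ v f(v,t) dv = μ for all t ≥ 0, such that v³ f(v,t), v³ ∂_v f(v,t), v² f(v,t) → 0 as v → ∞ and v ↦ v³ f(v,t), v³ ∂_vv f(v,t), v² f(v,t) are integrable for each t. Then d/dt ∫₀^∞ v³ f(v,t) dv = 6 μ − 3 f(0,t) ∫₀^∞ v² f(v,t) dv for all t ≥ 0. -/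
/-!
Multiplying the equation by `v³` and integrating by parts twice gives
`∫ v³ ∂_vv f = 6 ∫ v f = 6μ` and `∫ v³ ∂_v f = -3 ∫ v² f`; the boundary terms vanish at `0`
because of the weights and at `∞` by the decay assumptions.

The one point that needs an argument is that `v³ ∂_v f` is integrable. This follows from the
first-order Taylor formula on unit windows,
`∂_v f(v) = f(v+1) - f(v) - ∫_v^{v+1} (v+1-u) ∂_vv f(u) du`: after multiplying by `v³`, the first
two terms are controlled by `v³ f` and the remainder by the window integral of `u³ |∂_vv f(u)|`,
which is integrable in `v` by Fubini.
-/

open MeasureTheory Set Filter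

theorem MeasureTheory.Integrable.integrable_setIntegral_Ioc_add
    {E : Type*} [NormedAddCommGroup E] [NormedSpace ℝ E] {χ : ℝ → E}
    (hχ : Integrable χ) (a : ℝ) :
    Integrable fun v => ∫ u in Ioc v (v + a), χ u := by
  set S : Set (ℝ × ℝ) := {p | p.1 < p.2 ∧ p.2 ≤ p.1 + a}
  have hS : MeasurableSet S :=
    (measurableSet_lt measurable_fst measurable_snd).inter
      (measurableSet_le measurable_snd (measurable_fst.add_const a))
  have hslice : ∀ v u, S.indicator (fun p => χ p.2) (v, u)
      = (Ico (u - a) u).indicator (fun _ => χ u) v := by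
    intro v u
    simp only [S, indicator_apply, mem_ofPred_eq, mem_Ico]
    congr 1; apply propext; constructor <;> rintro ⟨h1, h2⟩ <;> constructor <;> linarith
  have hF : Integrable (S.indicator fun p => χ p.2) (volume.prod volume) := by
    refine (integrable_prod_iff' (hχ.aestronglyMeasurable.comp_snd.indicator hS)).2 ⟨?_, ?_⟩
    · refine ae_of_all _ fun u => ?_
      simp only [hslice]
      rw [integrable_indicator_iff measurableSet_Ico]
      exact integrableOn_const (by simp)
    · simp only [hslice, norm_indicator_eq_indicator_norm,
        integral_indicator_const _ measurableSet_Ico, Real.volume_real_Ico, sub_sub_cancel,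
        smul_eq_mul]
      exact hχ.norm.const_mul _
  refine hF.integral_prod_left.congr (ae_of_all _ fun v => ?_)
  dsimp only
  rw [← integral_indicator measurableSet_Ioc]
  rfl

theorem taylor_integral_remainder_one
    {E : Type*} [NormedAddCommGroup E] [NormedSpace ℝ E] [CompleteSpace E]
    {g g' g'' : ℝ → E} {a b : ℝ}
    (hg : ∀ u ∈ uIcc a b, HasDerivAt g (g' u) u)
    (hg' : ∀ u ∈ uIcc a b, HasDerivAt g' (g'' u) u)
    (hg'' : IntervalIntegrable g'' volume a b) :
    ∫ u in a..b, (b - u) • g'' u = g b - g a - (b - a) • g' a := by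
  have hrem : ∀ u ∈ uIcc a b,
      HasDerivAt (fun u => g u + (b - u) • g' u) ((b - u) • g'' u) u := by
    intro u hu
    refine ((hg u hu).add (((hasDerivAt_id u).const_sub b).smul (hg' u hu))).congr_deriv ?_
    simp only [id, neg_smul, one_smul]
    abel
  rw [intervalIntegral.integral_eq_sub_of_hasDerivAt hrem
    (hg''.continuousOn_smul (continuous_const.sub continuous_id).continuousOn)]
  simp only [sub_self, zero_smul, add_zero]
  abel

theorem pow_mul_abs_deriv_le {g g' g'' : ℝ → ℝ} {v : ℝ} (n : ℕ) (hv : 0 ≤ v)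
    (hg : ∀ u ∈ Icc v (v + 1), HasDerivAt g (g' u) u)
    (hg' : ∀ u ∈ Icc v (v + 1), HasDerivAt g' (g'' u) u)
    (hg'' : IntegrableOn g'' (Ioc v (v + 1)))
    (hg''n : IntegrableOn (fun u => u ^ n * g'' u) (Ioc v (v + 1))) :
    v ^ n * |g' v| ≤ |(v + 1) ^ n * g (v + 1)| + |v ^ n * g v|
      + ∫ u in Ioc v (v + 1), |u ^ n * g'' u| := by
  have hvv : v ≤ v + 1 := by linarith
  have htaylor := taylor_integral_remainder_one (g := g) (g' := g') (g'' := g'')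
    (by rwa [uIcc_of_le hvv]) (by rwa [uIcc_of_le hvv])
    ((intervalIntegrable_iff_integrableOn_Ioc_of_le hvv).2 hg'')
  simp only [smul_eq_mul, add_sub_cancel_left, one_mul] at htaylor
  set R := ∫ u in v..v + 1, (v + 1 - u) * g'' u with hR
  have hweight : ∀ u ∈ Ioc v (v + 1), ‖v ^ n * ((v + 1 - u) * g'' u)‖ ≤ |u ^ n * g'' u| := by
    intro u hu
    have hvu : v ^ n ≤ u ^ n := pow_le_pow_left₀ hv hu.1.le n
    have hu1 : 0 ≤ v + 1 - u ∧ v + 1 - u ≤ 1 := ⟨by linarith [hu.2], by linarith [hu.1]⟩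
    rw [Real.norm_eq_abs, abs_mul, abs_mul, abs_mul, abs_of_nonneg hu1.1,
      abs_of_nonneg (pow_nonneg hv n), abs_of_nonneg (pow_nonneg (hv.trans hu.1.le) n)]
    calc v ^ n * ((v + 1 - u) * |g'' u|) ≤ v ^ n * (1 * |g'' u|) := by gcongr; exact hu1.2
      _ ≤ u ^ n * |g'' u| := by rw [one_mul]; gcongr
  have hremainder : v ^ n * |R| ≤ ∫ u in Ioc v (v + 1), |u ^ n * g'' u| := by
    rw [← abs_of_nonneg (pow_nonneg hv n), ← abs_mul, ← Real.norm_eq_abs, hR,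
      ← intervalIntegral.integral_const_mul, intervalIntegral.integral_of_le hvv]
    exact norm_integral_le_of_norm_le hg''n.abs
      ((ae_restrict_iff' measurableSet_Ioc).2 (ae_of_all _ hweight))
  have hg'v : g' v = g (v + 1) - g v - R := by linarith
  have hvn : v ^ n ≤ (v + 1) ^ n := pow_le_pow_left₀ hv hvv n
  rw [hg'v, abs_mul, abs_mul, abs_of_nonneg (pow_nonneg hv n),
    abs_of_nonneg (pow_nonneg (hv.trans hvv) n)]
  calc v ^ n * |g (v + 1) - g v - R| ≤ v ^ n * (|g (v + 1)| + |g v| + |R|) := by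
        gcongr
        exact (abs_sub _ _).trans (add_le_add_left (abs_sub _ _) _)
    _ ≤ (v + 1) ^ n * |g (v + 1)| + v ^ n * |g v| + v ^ n * |R| := by
        rw [mul_add, mul_add]; gcongr
    _ ≤ _ := by gcongr

theorem integrableOn_Ioi_pow_mul_deriv {g g' g'' : ℝ → ℝ} (n : ℕ)
    (hg : ∀ u, 0 ≤ u → HasDerivAt g (g' u) u)
    (hg' : ∀ u, 0 ≤ u → HasDerivAt g' (g'' u) u)
    (hgn : IntegrableOn (fun u => u ^ n * g u) (Ioi 0))
    (hg'' : IntegrableOn g'' (Ioi 0))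
    (hg''n : IntegrableOn (fun u => u ^ n * g'' u) (Ioi 0)) :
    IntegrableOn (fun u => u ^ n * g' u) (Ioi 0) := by
  have hg'meas : AEStronglyMeasurable g' (volume.restrict (Ioi 0)) :=
    (measurable_deriv g).aestronglyMeasurable.congr <|
      (ae_restrict_iff' measurableSet_Ioi).2 (ae_of_all _ fun u hu => (hg u (le_of_lt hu)).deriv)
  have hshift : IntegrableOn (fun v => (v + 1) ^ n * g (v + 1)) (Ioi 0) := by
    have := (measurePreserving_add_right volume (1 : ℝ)).integrableOn_comp_preimage
      (measurableEmbedding_addRight 1) (s := Ioi 1) (f := fun u => u ^ n * g u)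
    rw [preimage_add_const_Ioi, sub_self] at this
    exact this.2 (hgn.mono_set (Ioi_subset_Ioi zero_le_one))
  set χ := (Ioi 0).indicator fun u => |u ^ n * g'' u|
  have hχ : Integrable χ := (integrable_indicator_iff measurableSet_Ioi).2 hg''n.abs
  refine ((hshift.abs.add hgn.abs).add (hχ.integrable_setIntegral_Ioc_add 1).integrableOn).mono'
    ((continuous_pow n).aestronglyMeasurable.mul hg'meas)
    ((ae_restrict_iff' measurableSet_Ioi).2 (ae_of_all _ fun v hv => ?_))
  have hv : (0 : ℝ) ≤ v := le_of_lt hv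
  have hwindow : Ioc v (v + 1) ⊆ Ioi 0 := fun u hu => hv.trans_lt hu.1
  have hχwindow : ∫ u in Ioc v (v + 1), χ u = ∫ u in Ioc v (v + 1), |u ^ n * g'' u| :=
    setIntegral_congr_fun measurableSet_Ioc fun u hu => indicator_of_mem (hwindow hu) _
  rw [Pi.add_apply, Pi.add_apply, hχwindow, norm_mul, Real.norm_eq_abs, Real.norm_eq_abs,
    abs_of_nonneg (pow_nonneg hv n)]
  exact pow_mul_abs_deriv_le n hv (fun u hu => hg u (hv.trans hu.1))
    (fun u hu => hg' u (hv.trans hu.1)) (hg''.mono_set hwindow) (hg''n.mono_set hwindow)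

theorem integral_Ioi_pow_succ_mul_deriv {g g' : ℝ → ℝ} (n : ℕ)
    (hg : ∀ x, 0 ≤ x → HasDerivAt g (g' x) x)
    (hg' : IntegrableOn (fun v => v ^ (n + 1) * g' v) (Ioi 0))
    (hgn : IntegrableOn (fun v => v ^ n * g v) (Ioi 0))
    (hlim : Tendsto (fun v => v ^ (n + 1) * g v) atTop (nhds 0)) :
    ∫ v in Ioi (0:ℝ), v ^ (n + 1) * g' v = -(n + 1) * ∫ v in Ioi (0:ℝ), v ^ n * g v := by
  have hderiv : ∀ x ∈ Ici (0:ℝ), HasDerivAt (fun v => v ^ (n + 1) * g v)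
      ((n + 1) * (x ^ n * g x) + x ^ (n + 1) * g' x) x := by
    intro x hx
    refine ((hasDerivAt_pow (n + 1) x).mul (hg x hx)).congr_deriv ?_
    rw [Nat.add_sub_cancel]
    push_cast
    ring
  have := integral_Ioi_of_hasDerivAt_of_tendsto' hderiv ((hgn.const_mul _).add hg') hlim
  rw [integral_add (hgn.const_mul _) hg', integral_const_mul] at this
  simp only [zero_pow n.add_one_ne_zero, zero_mul, sub_zero] at this
  linear_combination this

theorem MeasureTheory.IntegrableOn.pow_mul_of_le {g : ℝ → ℝ} {k m : ℕ} (hkm : k ≤ m)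
    (hg : IntegrableOn g (Ioi 0)) (hgm : IntegrableOn (fun v => v ^ m * g v) (Ioi 0)) :
    IntegrableOn (fun v => v ^ k * g v) (Ioi 0) := by
  refine (hg.norm.add hgm.norm).mono' ((continuous_pow k).aestronglyMeasurable.mul
    hg.aestronglyMeasurable) ((ae_restrict_iff' measurableSet_Ioi).2 (ae_of_all _ fun v hv => ?_))
  have hv : (0:ℝ) ≤ v := le_of_lt hv
  have hpow : v ^ k ≤ 1 + v ^ m := by
    rcases le_total v 1 with h | h
    · linarith [pow_le_one₀ hv h (n := k), pow_nonneg hv m]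
    · linarith [pow_le_pow_right₀ h hkm]
  simp only [Pi.add_apply, norm_mul, Real.norm_eq_abs, abs_pow, abs_of_nonneg hv]
  nlinarith [abs_nonneg (g v)]

theorem BDY_PDE_third_moment_general
    (μ : ℝ)
    (f ft fv fvv : ℝ → ℝ → ℝ)
    (hfv : ∀ v t : ℝ, 0 ≤ v → 0 ≤ t → HasDerivAt (fun w => f w t) (fv v t) v)
    (hfvv : ∀ v t : ℝ, 0 ≤ v → 0 ≤ t → HasDerivAt (fun w => fv w t) (fvv v t) v)
    (hint_fv : ∀ t : ℝ, 0 ≤ t → IntegrableOn (fun v => fv v t) (Ioi 0))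
    (hint_fvv : ∀ t : ℝ, 0 ≤ t → IntegrableOn (fun v => fvv v t) (Ioi 0))
    (hint_vf : ∀ t : ℝ, 0 ≤ t → IntegrableOn (fun v => v * f v t) (Ioi 0))
    (hint_v2f : ∀ t : ℝ, 0 ≤ t → IntegrableOn (fun v => v ^ 2 * f v t) (Ioi 0))
    (hint_v3f : ∀ t : ℝ, 0 ≤ t → IntegrableOn (fun v => v ^ 3 * f v t) (Ioi 0))
    (hint_v3fvv : ∀ t : ℝ, 0 ≤ t → IntegrableOn (fun v => v ^ 3 * fvv v t) (Ioi 0))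
    (hmean : ∀ t : ℝ, 0 ≤ t → ∫ v in Ioi (0:ℝ), v * f v t = μ)
    (hdecay_v3f : ∀ t : ℝ, 0 ≤ t → Tendsto (fun v => v ^ 3 * f v t) atTop (nhds 0))
    (hdecay_v3fv : ∀ t : ℝ, 0 ≤ t → Tendsto (fun v => v ^ 3 * fv v t) atTop (nhds 0))
    (hdecay_v2f : ∀ t : ℝ, 0 ≤ t → Tendsto (fun v => v ^ 2 * f v t) atTop (nhds 0))
    (hPDE : ∀ v t : ℝ, 0 < v → 0 ≤ t → ft v t = fvv v t + f 0 t * fv v t)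
    (hDUI : ∀ t : ℝ, 0 ≤ t →
      HasDerivAt (fun s => ∫ v in Ioi (0:ℝ), v ^ 3 * f v s)
        (∫ v in Ioi (0:ℝ), v ^ 3 * ft v t) t) :
    ∀ t : ℝ, 0 ≤ t →
      deriv (fun s => ∫ v in Ioi (0:ℝ), v ^ 3 * f v s) t
        = 6 * μ - 3 * f 0 t * ∫ v in Ioi (0:ℝ), v ^ 2 * f v t := by
  intro t ht
  have hv3fv : IntegrableOn (fun v => v ^ 3 * fv v t) (Ioi 0) :=
    integrableOn_Ioi_pow_mul_deriv 3 (fun v hv => hfv v t hv ht) (fun v hv => hfvv v t hv ht)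
      (hint_v3f t ht) (hint_fvv t ht) (hint_v3fvv t ht)
  have hv2fv : IntegrableOn (fun v => v ^ 2 * fv v t) (Ioi 0) :=
    (hint_fv t ht).pow_mul_of_le (by norm_num) hv3fv
  have hf3 : ∫ v in Ioi (0:ℝ), v ^ 3 * fv v t = -3 * ∫ v in Ioi (0:ℝ), v ^ 2 * f v t := by
    have := integral_Ioi_pow_succ_mul_deriv 2 (fun v hv => hfv v t hv ht) hv3fv
      (hint_v2f t ht) (hdecay_v3f t ht)
    norm_num at this
    linarith
  have hfv3 : ∫ v in Ioi (0:ℝ), v ^ 3 * fvv v t = -3 * ∫ v in Ioi (0:ℝ), v ^ 2 * fv v t := by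
    have := integral_Ioi_pow_succ_mul_deriv 2 (fun v hv => hfvv v t hv ht) (hint_v3fvv t ht)
      hv2fv (hdecay_v3fv t ht)
    norm_num at this
    linarith
  have hf2 : ∫ v in Ioi (0:ℝ), v ^ 2 * fv v t = -2 * ∫ v in Ioi (0:ℝ), v * f v t := by
    have := integral_Ioi_pow_succ_mul_deriv 1 (fun v hv => hfv v t hv ht) hv2fv
      (by simpa using hint_vf t ht) (hdecay_v2f t ht)
    norm_num at this
    linarith
  have hPDE_moment : ∫ v in Ioi (0:ℝ), v ^ 3 * ft v t
      = ∫ v in Ioi (0:ℝ), (v ^ 3 * fvv v t + f 0 t * (v ^ 3 * fv v t)) :=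
    setIntegral_congr_fun measurableSet_Ioi fun v hv => by
      rw [hPDE v t hv ht]
      ring
  rw [(hDUI t ht).deriv, hPDE_moment, integral_add (hint_v3fvv t ht) (hv3fv.const_mul _),
    integral_const_mul, hfv3, hf2, hf3, hmean t ht]
  ring

/-- **Evolution of the third moment for the BDY PDE.**
Let `μ > 0` and let `f` be a classical solution of the BDY PDE
`∂_t f = ∂_vv f + f(0,t) ∂_v f` with Robin boundary condition `∂_v f(0,t) + f(0,t)² = 0`,
which is for every `t` a probability density with mean `μ`, such that
`v³ f(v,t), v³ ∂_v f(v,t), v² f(v,t) → 0` as `v → ∞` and `v ↦ v³ f(v,t)`,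
`v ↦ v³ ∂_vv f(v,t)`, `v ↦ v² f(v,t)` are integrable for each `t`, and the third moment
may be differentiated in time under the integral sign. Then
`d/dt ∫₀^∞ v³ f(v,t) dv = 6μ − 3 f(0,t) ∫₀^∞ v² f(v,t) dv` for all `t ≥ 0`. -/
theorem BDY_PDE_third_moment
    (μ : ℝ) (hμ : 0 < μ)
    (f ft fv fvv : ℝ → ℝ → ℝ)
    (hcont : ContinuousOn (fun p : ℝ × ℝ => f p.1 p.2) (Ici 0 ×ˢ Ici 0))
    (hfv : ∀ v t : ℝ, 0 ≤ v → 0 ≤ t → HasDerivAt (fun w => f w t) (fv v t) v)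
    (hfvv : ∀ v t : ℝ, 0 ≤ v → 0 ≤ t → HasDerivAt (fun w => fv w t) (fvv v t) v)
    (hft : ∀ v t : ℝ, 0 ≤ v → 0 ≤ t → HasDerivAt (fun s => f v s) (ft v t) t)
    (hint : ∀ t : ℝ, 0 ≤ t → IntegrableOn (fun v => f v t) (Ioi 0))
    (hint_fv : ∀ t : ℝ, 0 ≤ t → IntegrableOn (fun v => fv v t) (Ioi 0))
    (hint_fvv : ∀ t : ℝ, 0 ≤ t → IntegrableOn (fun v => fvv v t) (Ioi 0))
    (hint_vf : ∀ t : ℝ, 0 ≤ t → IntegrableOn (fun v => v * f v t) (Ioi 0))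
    (hint_v2f : ∀ t : ℝ, 0 ≤ t → IntegrableOn (fun v => v ^ 2 * f v t) (Ioi 0))
    (hint_v3f : ∀ t : ℝ, 0 ≤ t → IntegrableOn (fun v => v ^ 3 * f v t) (Ioi 0))
    (hint_v3fvv : ∀ t : ℝ, 0 ≤ t → IntegrableOn (fun v => v ^ 3 * fvv v t) (Ioi 0))
    (hmass : ∀ t : ℝ, 0 ≤ t → ∫ v in Ioi (0:ℝ), f v t = 1)
    (hmean : ∀ t : ℝ, 0 ≤ t → ∫ v in Ioi (0:ℝ), v * f v t = μ)
    (hdecay : ∀ t : ℝ, 0 ≤ t → Tendsto (fun v => f v t) atTop (nhds 0))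
    (hdecay_fv : ∀ t : ℝ, 0 ≤ t → Tendsto (fun v => fv v t) atTop (nhds 0))
    (hdecay_v3f : ∀ t : ℝ, 0 ≤ t → Tendsto (fun v => v ^ 3 * f v t) atTop (nhds 0))
    (hdecay_v3fv : ∀ t : ℝ, 0 ≤ t → Tendsto (fun v => v ^ 3 * fv v t) atTop (nhds 0))
    (hdecay_v2f : ∀ t : ℝ, 0 ≤ t → Tendsto (fun v => v ^ 2 * f v t) atTop (nhds 0))
    (hPDE : ∀ v t : ℝ, 0 < v → 0 ≤ t → ft v t = fvv v t + f 0 t * fv v t)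
    (hBC : ∀ t : ℝ, 0 ≤ t → fv 0 t + (f 0 t) ^ 2 = 0)
    (hDUI : ∀ t : ℝ, 0 ≤ t →
      HasDerivAt (fun s => ∫ v in Ioi (0:ℝ), v ^ 3 * f v s)
        (∫ v in Ioi (0:ℝ), v ^ 3 * ft v t) t) :
    ∀ t : ℝ, 0 ≤ t →
      deriv (fun s => ∫ v in Ioi (0:ℝ), v ^ 3 * f v s) t
        = 6 * μ - 3 * f 0 t * ∫ v in Ioi (0:ℝ), v ^ 2 * f v t :=
  BDY_PDE_third_moment_general μ f ft fv fvv hfv hfvv hint_fv hint_fvv hint_vf hint_v2f hint_v3f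
    hint_v3fvv hmean hdecay_v3f hdecay_v3fv hdecay_v2f hPDE hDUI
end

section
/- Let μ > 0, let f be a strictly positive classical solution of the BDY PDE on [0,∞) × [0,∞), set F(v,t) = f(v,t)/f∞(v) and Λ(t) = ∂_v F(0,t)/F(0,t), and assume there are constants 0 < c < C with c ≤ F(v,t) ≤ C for all v, t. Let Φ : ℝ₊ → ℝ be a smooth convex function, and assume f∞ ( ∂_v F − Λ F ) → 0 as v → ∞, integrability of all integrands below, and that t ↦ Θ[F](t) := ∫₀^∞ f∞(v) Φ(F(v,t)) dv may be differentiated under the integral sign. Then for all t ≥ 0: d/dt Θ[F](t) = − I_Θ[F](t), where I_Θ[F](t) := ∫₀^∞ f∞(v) Φ''(F(v,t)) |∂_v F(v,t)|² dv − Λ(t) ∫₀^∞ f∞(v) Φ''(F(v,t)) F(v,t) ∂_v F(v,t) dv. -/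
open MeasureTheory Set Filter

/-- **Evolution of generalized entropies for the BDY PDE (Theorem Teo1).**
Let `μ > 0`, `f∞(v) = (1/μ) e^{−v/μ}`, let `f` be a strictly positive classical solution
of the BDY PDE, set `F = f/f∞` and `Λ(t) = ∂_v F(0,t)/F(0,t)`, and assume
`0 < c ≤ F(v,t) ≤ C` for all `v,t`. Let `Φ : ℝ₊ → ℝ` be a smooth convex function, assume
`f∞ (∂_v F − Λ F) → 0` as `v → ∞`, integrability of all integrands below, and that
`Θ[F](t) = ∫₀^∞ f∞ Φ(F) dv` may be differentiated under the integral sign. Then for all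
`t ≥ 0`, `d/dt Θ[F](t) = − I_Θ[F](t)`, where
`I_Θ[F](t) = ∫₀^∞ f∞ Φ''(F) |∂_v F|² dv − Λ(t) ∫₀^∞ f∞ Φ''(F) F ∂_v F dv`. -/
theorem BDY_PDE_generalized_entropy_production
    (μ : ℝ) (hμ : 0 < μ)
    (f ft fv fvv : ℝ → ℝ → ℝ)
    (hcont : ContinuousOn (fun p : ℝ × ℝ => f p.1 p.2) (Ici 0 ×ˢ Ici 0))
    (hfv : ∀ v t : ℝ, 0 ≤ v → 0 ≤ t → HasDerivAt (fun w => f w t) (fv v t) v)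
    (hfvv : ∀ v t : ℝ, 0 ≤ v → 0 ≤ t → HasDerivAt (fun w => fv w t) (fvv v t) v)
    (hft : ∀ v t : ℝ, 0 ≤ v → 0 ≤ t → HasDerivAt (fun s => f v s) (ft v t) t)
    (hpos : ∀ v t : ℝ, 0 ≤ v → 0 ≤ t → 0 < f v t)
    (hint : ∀ t : ℝ, 0 ≤ t → IntegrableOn (fun v => f v t) (Ioi 0))
    (hint_fv : ∀ t : ℝ, 0 ≤ t → IntegrableOn (fun v => fv v t) (Ioi 0))
    (hint_fvv : ∀ t : ℝ, 0 ≤ t → IntegrableOn (fun v => fvv v t) (Ioi 0))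
    (hdecayf : ∀ t : ℝ, 0 ≤ t → Tendsto (fun v => f v t) atTop (nhds 0))
    (hdecayfv : ∀ t : ℝ, 0 ≤ t → Tendsto (fun v => fv v t) atTop (nhds 0))
    (hPDE : ∀ v t : ℝ, 0 < v → 0 ≤ t → ft v t = fvv v t + f 0 t * fv v t)
    (hBC : ∀ t : ℝ, 0 ≤ t → fv 0 t + (f 0 t) ^ 2 = 0)
    -- the ratio F = f/f∞, its derivatives, and Λ
    (F Fv Ft' : ℝ → ℝ → ℝ) (Λ : ℝ → ℝ)
    (hFdef : ∀ v t : ℝ, F v t = f v t / ((1 / μ) * Real.exp (-v / μ)))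
    (hFv : ∀ v t : ℝ, 0 ≤ v → 0 ≤ t → HasDerivAt (fun w => F w t) (Fv v t) v)
    (hFt : ∀ v t : ℝ, 0 ≤ v → 0 ≤ t → HasDerivAt (fun s => F v s) (Ft' v t) t)
    (hΛdef : ∀ t : ℝ, Λ t = Fv 0 t / F 0 t)
    -- uniform two-sided bounds on F
    (c C : ℝ) (hc : 0 < c) (hcC : c < C)
    (hFbounds : ∀ v t : ℝ, 0 ≤ v → 0 ≤ t → c ≤ F v t ∧ F v t ≤ C)
    -- the smooth convex function Φ
    (Φ : ℝ → ℝ) (hΦ : ContDiff ℝ (⊤ : ℕ∞) Φ) (hΦconv : ConvexOn ℝ (Ici 0) Φ)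
    -- decay of the flux at infinity
    (hfluxdecay : ∀ t : ℝ, 0 ≤ t →
      Tendsto (fun v => ((1 / μ) * Real.exp (-v / μ)) * (Fv v t - Λ t * F v t))
        atTop (nhds 0))
    -- integrability of all integrands below
    (hint1 : ∀ t : ℝ, 0 ≤ t → IntegrableOn
      (fun v => ((1 / μ) * Real.exp (-v / μ)) * deriv (deriv Φ) (F v t) * (Fv v t) ^ 2)
      (Ioi 0))
    (hint2 : ∀ t : ℝ, 0 ≤ t → IntegrableOn
      (fun v => ((1 / μ) * Real.exp (-v / μ)) * deriv (deriv Φ) (F v t) * F v t * Fv v t)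
      (Ioi 0))
    (hint3 : ∀ t : ℝ, 0 ≤ t → IntegrableOn
      (fun v => ((1 / μ) * Real.exp (-v / μ)) * Φ (F v t)) (Ioi 0))
    -- differentiation under the integral sign for Θ[F]
    (hDUI : ∀ t : ℝ, 0 ≤ t →
      HasDerivAt (fun s => ∫ v in Ioi (0:ℝ), ((1 / μ) * Real.exp (-v / μ)) * Φ (F v s))
        (∫ v in Ioi (0:ℝ),
          ((1 / μ) * Real.exp (-v / μ)) * deriv Φ (F v t) * Ft' v t) t) :
    ∀ t : ℝ, 0 ≤ t →
      deriv (fun s => ∫ v in Ioi (0:ℝ), ((1 / μ) * Real.exp (-v / μ)) * Φ (F v s)) t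
        = -((∫ v in Ioi (0:ℝ),
              ((1 / μ) * Real.exp (-v / μ)) * deriv (deriv Φ) (F v t) * (Fv v t) ^ 2)
            - Λ t * ∫ v in Ioi (0:ℝ),
              ((1 / μ) * Real.exp (-v / μ)) * deriv (deriv Φ) (F v t) * F v t * Fv v t) := by
  intro t ht
  set E : ℝ → ℝ := fun v => (1 / μ) * Real.exp (-v / μ) with hEdef
  have hμ' : μ ≠ 0 := ne_of_gt hμ
  have hEpos : ∀ v, 0 < E v := fun v => mul_pos (by positivity) (Real.exp_pos _)
  have hEne : ∀ v, E v ≠ 0 := fun v => ne_of_gt (hEpos v)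
  have hE : ∀ v, HasDerivAt E (-(E v) / μ) v := by
    intro v
    have h1 : HasDerivAt (fun w : ℝ => -w / μ) (-1 / μ) v := by
      simpa using ((hasDerivAt_id v).neg.div_const μ)
    have h2 := h1.exp.const_mul (1 / μ)
    refine h2.congr_deriv ?_
    simp only [hEdef]
    ring
  have hfEq : ∀ v s : ℝ, F v s = f v s / E v := fun v s => hFdef v s
  -- formula for Fv
  have hFveq : ∀ v : ℝ, 0 ≤ v → Fv v t = (fv v t + f v t / μ) / E v := by
    intro v hv
    have h2 : HasDerivAt (fun w => f w t / E w)
        ((fv v t * E v - f v t * (-(E v) / μ)) / (E v) ^ 2) v :=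
      (hfv v t hv ht).div (hE v) (hEne v)
    have h1 : HasDerivAt (fun w => f w t / E w) (Fv v t) v :=
      (hFv v t hv ht).congr_of_eventuallyEq
        (Filter.Eventually.of_forall fun w => (hfEq w t).symm)
    rw [h1.unique h2]
    field_simp
    ring
  -- formula for Ft'
  have hFteq : ∀ v : ℝ, 0 ≤ v → Ft' v t = ft v t / E v := by
    intro v hv
    have h2 : HasDerivAt (fun s => f v s / E v) (ft v t / E v) t :=
      (hft v t hv ht).div_const (E v)
    have h1 : HasDerivAt (fun s => f v s / E v) (Ft' v t) t :=
      (hFt v t hv ht).congr_of_eventuallyEq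
        (Filter.Eventually.of_forall fun s => (hfEq v s).symm)
    exact h1.unique h2
  have hf0 : (0:ℝ) < f 0 t := hpos 0 t le_rfl ht
  have hfv0 : fv 0 t = -(f 0 t) ^ 2 := by linarith [hBC t ht]
  -- formula for Λ
  have hΛ' : Λ t = 1 / μ - f 0 t := by
    rw [hΛdef t, hFveq 0 le_rfl, hfEq 0 t, hfv0]
    have := hEne 0
    field_simp
    ring
  -- facts about Φ
  have hPhiI : ContDiff ℝ ((⊤ : ℕ∞) : WithTop ℕ∞) Φ := hΦ.of_le (by simp)
  have hΦ1 : ContDiff ℝ ((⊤ : ℕ∞) : WithTop ℕ∞) (deriv Φ) := (contDiff_infty_iff_deriv.mp hPhiI).2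
  have hΦ'c : Continuous (deriv Φ) := hΦ1.continuous
  have hΦ'd : ∀ x : ℝ, HasDerivAt (deriv Φ) (deriv (deriv Φ) x) x :=
    fun x => (hΦ1.differentiable (by simp) x).hasDerivAt
  -- the auxiliary function g and its derivative
  set g : ℝ → ℝ := fun v => deriv Φ (F v t) * (fv v t + f v t / μ - Λ t * f v t)
    with hgdef
  have hgd : ∀ v : ℝ, 0 ≤ v → HasDerivAt g
      (deriv (deriv Φ) (F v t) * Fv v t * (fv v t + f v t / μ - Λ t * f v t)
        + deriv Φ (F v t) * (fvv v t + fv v t / μ - Λ t * fv v t)) v := by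
    intro v hv
    have hchain : HasDerivAt (fun w => deriv Φ (F w t))
        (deriv (deriv Φ) (F v t) * Fv v t) v :=
      ((hΦ'd (F v t)).comp v (hFv v t hv ht) :)
    have hrest : HasDerivAt (fun w => fv w t + f w t / μ - Λ t * f w t)
        (fvv v t + fv v t / μ - Λ t * fv v t) v :=
      ((hfvv v t hv ht).add ((hfv v t hv ht).div_const μ)).sub
        ((hfv v t hv ht).const_mul (Λ t))
    exact hchain.mul hrest
  -- the rewritten derivative for v > 0
  set G : ℝ → ℝ := fun v =>
      (E v * deriv (deriv Φ) (F v t) * (Fv v t) ^ 2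
        - Λ t * (E v * deriv (deriv Φ) (F v t) * F v t * Fv v t))
      + E v * deriv Φ (F v t) * Ft' v t with hGdef
  have hgd' : ∀ v ∈ Ioi (0:ℝ), HasDerivAt g (G v) v := by
    intro v hv
    have hv' : (0:ℝ) ≤ v := le_of_lt hv
    have h := hgd v hv'
    have hval :
        deriv (deriv Φ) (F v t) * Fv v t * (fv v t + f v t / μ - Λ t * f v t)
          + deriv Φ (F v t) * (fvv v t + fv v t / μ - Λ t * fv v t) = G v := by
      simp only [hGdef]
      rw [hFveq v hv', hFteq v hv', hfEq v t, hPDE v t hv ht, hΛ']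
      have := hEne v
      field_simp
      ring
    rw [hval] at h
    exact h
  -- g 0 = 0
  have hg0 : g 0 = 0 := by
    have : fv 0 t + f 0 t / μ - Λ t * f 0 t = 0 := by
      rw [hΛ']
      linear_combination hBC t ht
    simp only [hgdef, this, mul_zero]
  -- bound on deriv Φ ∘ F
  obtain ⟨M, hM⟩ := (isCompact_Icc (a := c) (b := C)).exists_bound_of_continuousOn
    hΦ'c.continuousOn
  have hMF : ∀ v : ℝ, 0 ≤ v → ‖deriv Φ (F v t)‖ ≤ M := fun v hv =>
    hM (F v t) ⟨(hFbounds v t hv ht).1, (hFbounds v t hv ht).2⟩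
  -- g tends to 0 at infinity
  have hgflux : ∀ v : ℝ, 0 ≤ v → g v = deriv Φ (F v t) * (E v * (Fv v t - Λ t * F v t)) := by
    intro v hv
    simp only [hgdef]
    rw [hFveq v hv, hfEq v t]
    have := hEne v
    field_simp
  have hgtend : Tendsto g atTop (nhds 0) := by
    have h3 : Tendsto (fun v => M * |E v * (Fv v t - Λ t * F v t)|) atTop (nhds 0) := by
      have h := ((hfluxdecay t ht).abs).const_mul M
      simp only [abs_zero, mul_zero] at h
      simp only [hEdef]
      exact h
    have h2 : ∀ᶠ v in atTop, |g v| ≤ M * |E v * (Fv v t - Λ t * F v t)| := by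
      filter_upwards [eventually_ge_atTop (0:ℝ)] with v hv
      rw [hgflux v hv, abs_mul]
      exact mul_le_mul_of_nonneg_right (hMF v hv) (abs_nonneg _)
    rw [tendsto_zero_iff_abs_tendsto_zero]
    exact squeeze_zero' (Filter.Eventually.of_forall fun v => abs_nonneg _) h2 h3
  -- continuity of g at 0 from the right
  have hgcont : ContinuousWithinAt g (Ici (0:ℝ)) 0 :=
    (hgd 0 le_rfl).continuousAt.continuousWithinAt
  -- measurability of deriv Φ (F v t)
  have hFcont : ContinuousOn (fun v => F v t) (Ioi 0) := by
    have h1 : ContinuousOn (fun v => f v t) (Ioi 0) := fun v hv =>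
      ((hfv v t (le_of_lt hv) ht).continuousAt).continuousWithinAt
    have h2 : ContinuousOn (fun v => f v t / E v) (Ioi 0) :=
      h1.div (Continuous.continuousOn (by fun_prop)) (fun v _ => hEne v)
    exact h2.congr fun v _ => hfEq v t
  have hmeasΦ' : AEStronglyMeasurable (fun v => deriv Φ (F v t))
      (volume.restrict (Ioi 0)) :=
    (hΦ'c.comp_continuousOn hFcont).aestronglyMeasurable measurableSet_Ioi
  -- integrability of the last piece of G
  have hφ1int : IntegrableOn (fun v => E v * deriv Φ (F v t) * Ft' v t) (Ioi 0) := by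
    have hbase : IntegrableOn (fun v => fvv v t + f 0 t * fv v t) (Ioi 0) :=
      (hint_fvv t ht).add ((hint_fv t ht).const_mul (f 0 t))
    have hmul : IntegrableOn
        (fun v => deriv Φ (F v t) * (fvv v t + f 0 t * fv v t)) (Ioi 0) :=
      Integrable.bdd_mul hbase hmeasΦ'
        ((ae_restrict_iff' measurableSet_Ioi).mpr
          (Filter.Eventually.of_forall fun v hv => hMF v (le_of_lt hv)))
    apply hmul.congr_fun _ measurableSet_Ioi
    intro v hv
    show deriv Φ (F v t) * (fvv v t + f 0 t * fv v t) = E v * deriv Φ (F v t) * Ft' v t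
    rw [hFteq v (le_of_lt hv), hPDE v t hv ht]
    have := hEne v
    field_simp
  have hGint : IntegrableOn G (Ioi 0) := by
    have h2 : IntegrableOn (fun v =>
        Λ t * (E v * deriv (deriv Φ) (F v t) * F v t * Fv v t)) (Ioi 0) :=
      (hint2 t ht).const_mul (Λ t)
    exact (((hint1 t ht).sub h2).add hφ1int)
  -- integration by parts
  have hIBP : ∫ v in Ioi (0:ℝ), G v = 0 - g 0 :=
    MeasureTheory.integral_Ioi_of_hasDerivAt_of_tendsto hgcont hgd' hGint hgtend
  rw [hg0, sub_zero] at hIBP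
  -- split the integral of G
  have h2int : IntegrableOn (fun v =>
      Λ t * (E v * deriv (deriv Φ) (F v t) * F v t * Fv v t)) (Ioi 0) :=
    (hint2 t ht).const_mul (Λ t)
  have hsplit : ∫ v in Ioi (0:ℝ), G v =
      ((∫ v in Ioi (0:ℝ), E v * deriv (deriv Φ) (F v t) * (Fv v t) ^ 2)
        - Λ t * ∫ v in Ioi (0:ℝ), E v * deriv (deriv Φ) (F v t) * F v t * Fv v t)
      + ∫ v in Ioi (0:ℝ), E v * deriv Φ (F v t) * Ft' v t := by
    have hAB : IntegrableOn (fun v =>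
        E v * deriv (deriv Φ) (F v t) * (Fv v t) ^ 2
          - Λ t * (E v * deriv (deriv Φ) (F v t) * F v t * Fv v t)) (Ioi 0) :=
      (hint1 t ht).sub h2int
    simp only [hGdef]
    rw [MeasureTheory.integral_add hAB hφ1int,
      MeasureTheory.integral_sub (hint1 t ht) h2int,
      MeasureTheory.integral_const_mul]
  -- conclude
  rw [(hDUI t ht).deriv]
  have : (∫ v in Ioi (0:ℝ), E v * deriv Φ (F v t) * Ft' v t)
      = -((∫ v in Ioi (0:ℝ), E v * deriv (deriv Φ) (F v t) * (Fv v t) ^ 2)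
        - Λ t * ∫ v in Ioi (0:ℝ), E v * deriv (deriv Φ) (F v t) * F v t * Fv v t) := by
    rw [hsplit] at hIBP
    linarith
  exact this
end

section
/- Let μ > 0 and let f∞(v) = (1/μ) e^{−v/μ}. Let r : [0,∞) → ℝ be continuously differentiable with ∫₀^∞ r(v) dv = 0 and ∫₀^∞ v r(v) dv = 0, such that ∫₀^∞ |r'(v)|² / f∞(v) dv < ∞, r, v r, v² r' are integrable, and (1 + |v| + v²) |r(v)| → 0 as v → ∞. Then r(0)² ≤ (1/3) ∫₀^∞ |r'(v)|² / f∞(v) dv, i.e. r(0)² ≤ (1/3) ∫₀^∞ μ e^{v/μ} |r'(v)|² dv. -/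
/-!
Since `∫ v r' = -∫ r = 0` and `∫ v² r' = -2 ∫ v r = 0` (integration by parts, the boundary terms
vanishing by the decay of `r`), for every quadratic `q = 1 + a v + b v²` we have
`r(0) = -∫ q r'`. Cauchy–Schwarz with the weight `1/f∞ = μ e^{v/μ}` gives
`r(0)² ≤ (∫ q² f∞) (∫ r'² / f∞)`, and the best choice of `q` makes `∫ q² f∞ = 1/3`.
The same weighted Cauchy–Schwarz bound shows that every `vᵏ r'` is integrable.
-/

open MeasureTheory Set Filter

open scoped Nat Topology

section WeightedCauchySchwarz

variable {α : Type*} [MeasurableSpace α] {ν : Measure α} {w f g : α → ℝ}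

theorem integrable_mul_of_weighted_sq (hw : ∀ x, 0 < w x)
    (hfg : AEStronglyMeasurable (fun x => f x * g x) ν)
    (hf : Integrable (fun x => f x ^ 2 / w x) ν) (hg : Integrable (fun x => w x * g x ^ 2) ν) :
    Integrable (fun x => f x * g x) ν := by
  refine ((hf.add hg).div_const 2).mono' hfg (Eventually.of_forall fun x => ?_)
  have hwx := hw x
  have hamgm : 0 ≤ w x * (|g x| - |f x| / w x) ^ 2 := by positivity
  have hexp : w x * (|g x| - |f x| / w x) ^ 2
      = w x * g x ^ 2 - 2 * |f x * g x| + f x ^ 2 / w x := by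
    rw [abs_mul, ← sq_abs (g x), ← sq_abs (f x)]
    field_simp
    ring
  rw [Real.norm_eq_abs]
  simp only [Pi.add_apply]
  linarith

theorem sq_integral_mul_le_weighted (hw : ∀ x, 0 < w x)
    (hfg : AEStronglyMeasurable (fun x => f x * g x) ν)
    (hf : Integrable (fun x => f x ^ 2 / w x) ν) (hg : Integrable (fun x => w x * g x ^ 2) ν) :
    (∫ x, f x * g x ∂ν) ^ 2 ≤ (∫ x, f x ^ 2 / w x ∂ν) * ∫ x, w x * g x ^ 2 ∂ν := by
  have hfg_int := integrable_mul_of_weighted_sq hw hfg hf hg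
  have hquad : ∀ t : ℝ, 0 ≤ (∫ x, w x * g x ^ 2 ∂ν) * (t * t) + 2 * (∫ x, f x * g x ∂ν) * t
      + ∫ x, f x ^ 2 / w x ∂ν := by
    intro t
    have hexpand : ∀ x, w x * (t * g x + f x / w x) ^ 2
        = t ^ 2 * (w x * g x ^ 2) + (2 * t * (f x * g x) + f x ^ 2 / w x) := by
      intro x
      have := (hw x).ne'
      field_simp
      ring
    have hnonneg : 0 ≤ ∫ x, w x * (t * g x + f x / w x) ^ 2 ∂ν :=
      integral_nonneg fun x => mul_nonneg (hw x).le (sq_nonneg _)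
    simp only [hexpand] at hnonneg
    rw [integral_add (hg.const_mul _) ((hfg_int.const_mul _).fun_add hf),
      integral_add (hfg_int.const_mul _) hf, integral_const_mul, integral_const_mul] at hnonneg
    linarith
  have := discrim_le_zero hquad
  rw [discrim] at this
  nlinarith

end WeightedCauchySchwarz

theorem aestronglyMeasurable_of_hasDerivAt {r r' : ℝ → ℝ} {s : Set ℝ} (hs : MeasurableSet s)
    (hderiv : ∀ v ∈ s, HasDerivAt r (r' v) v) : AEStronglyMeasurable r' (volume.restrict s) :=
  (measurable_deriv r).aestronglyMeasurable.congr
    (ae_restrict_of_forall_mem hs fun v hv => (hderiv v hv).deriv)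

theorem tendsto_mul_of_abs_le {ι : Type*} {l : Filter ι} {b g r : ι → ℝ}
    (hg : ∀ v, |g v| ≤ b v) (hb : Tendsto (fun v => b v * |r v|) l (𝓝 0)) :
    Tendsto (fun v => g v * r v) l (𝓝 0) :=
  squeeze_zero_norm (fun v => by
    rw [norm_mul, Real.norm_eq_abs, Real.norm_eq_abs]
    exact mul_le_mul_of_nonneg_right (hg v) (abs_nonneg _)) hb

theorem abs_pow_le_one_add_abs_add_sq {k : ℕ} (hk : k ≤ 2) (v : ℝ) :
    |v ^ k| ≤ 1 + |v| + v ^ 2 := by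
  interval_cases k <;> simp <;> nlinarith [abs_nonneg v, sq_nonneg v]

theorem integral_Ioi_pow_succ_mul_deriv_s17 {r r' : ℝ → ℝ} (k : ℕ)
    (hderiv : ∀ v ∈ Ici 0, HasDerivAt r (r' v) v)
    (hint : IntegrableOn (fun v => v ^ k * r v) (Ioi 0))
    (hint' : IntegrableOn (fun v => v ^ (k + 1) * r' v) (Ioi 0))
    (hlim : Tendsto (fun v => v ^ (k + 1) * r v) atTop (𝓝 0)) :
    ∫ v in Ioi 0, v ^ (k + 1) * r' v = -((k + 1) * ∫ v in Ioi 0, v ^ k * r v) := by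
  have hprod : ∀ v ∈ Ici (0 : ℝ), HasDerivAt (fun v => v ^ (k + 1) * r v)
      ((k + 1) * (v ^ k * r v) + v ^ (k + 1) * r' v) v := fun v hv =>
    ((hasDerivAt_pow (k + 1) v).mul (hderiv v hv)).congr_deriv (by push_cast; ring)
  have hftc := integral_Ioi_of_hasDerivAt_of_tendsto' hprod
    ((hint.const_mul _).fun_add hint') hlim
  rw [integral_add (hint.const_mul _) hint', integral_const_mul] at hftc
  simp only [zero_pow k.succ_ne_zero, zero_mul, sub_zero] at hftc
  linarith

section BoltzmannMoments

variable {μ : ℝ}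

theorem integral_pow_div_mul_exp (hμ : 0 < μ) (n : ℕ) :
    ∫ v in Ioi 0, v ^ n / (μ * Real.exp (v / μ)) = n ! * μ ^ n := by
  have hgamma := Real.integral_rpow_mul_exp_neg_mul_Ioi (a := n + 1) (by positivity)
    (inv_pos.2 hμ)
  rw [Real.Gamma_nat_eq_factorial, one_div, inv_inv, add_sub_cancel_right,
    ← Nat.cast_add_one, Real.rpow_natCast] at hgamma
  calc ∫ v in Ioi 0, v ^ n / (μ * Real.exp (v / μ))
      = μ⁻¹ * ∫ v in Ioi 0, v ^ (n : ℝ) * Real.exp (-(μ⁻¹ * v)) := by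
        rw [← integral_const_mul]
        refine setIntegral_congr_fun measurableSet_Ioi fun v _ => ?_
        rw [Real.rpow_natCast, inv_mul_eq_div, Real.exp_neg]
        field_simp
    _ = n ! * μ ^ n := by
        rw [hgamma, pow_succ]
        field_simp

theorem integrableOn_pow_div_mul_exp (hμ : 0 < μ) (n : ℕ) :
    IntegrableOn (fun v => v ^ n / (μ * Real.exp (v / μ))) (Ioi 0) :=
  .of_integral_ne_zero (by rw [integral_pow_div_mul_exp hμ]; positivity)

end BoltzmannMoments

/-- The minimiser of `∫₀^∞ q² f∞ = ∫₀^∞ q² / (μ e^{v/μ})` over quadratics `q = 1 + a v + b v²`;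
it is `L₂⁽¹⁾(v/μ) / 3` for the Laguerre polynomial `L₂⁽¹⁾`. -/
noncomputable def boundaryTest (μ v : ℝ) : ℝ := 1 - v / μ + v ^ 2 / (6 * μ ^ 2)

section BoundaryTest

variable {μ : ℝ}

theorem boundaryTest_sq_div_mul_exp (hμ : 0 < μ) (v : ℝ) :
    boundaryTest μ v ^ 2 / (μ * Real.exp (v / μ))
      = ∑ k : Fin 5, ![1, -2, 4 / 3, -1 / 3, 1 / 36] k / μ ^ (k : ℕ)
          * (v ^ (k : ℕ) / (μ * Real.exp (v / μ))) := by
  simp only [boundaryTest, Fin.sum_univ_five, Matrix.cons_val, Fin.coe_ofNat_eq_mod, Nat.reduceMod]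
  field_simp
  ring

theorem integrableOn_boundaryTest_sq_div_mul_exp (hμ : 0 < μ) :
    IntegrableOn (fun v => boundaryTest μ v ^ 2 / (μ * Real.exp (v / μ))) (Ioi 0) := by
  simp only [boundaryTest_sq_div_mul_exp hμ]
  exact integrable_finsetSum _ fun k _ => (integrableOn_pow_div_mul_exp hμ k).const_mul _

theorem integral_boundaryTest_sq_div_mul_exp (hμ : 0 < μ) :
    ∫ v in Ioi 0, boundaryTest μ v ^ 2 / (μ * Real.exp (v / μ)) = 1 / 3 := by
  simp only [boundaryTest_sq_div_mul_exp hμ]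
  rw [integral_finsetSum _ fun (k : Fin 5) _ => (integrableOn_pow_div_mul_exp hμ k).const_mul _]
  simp only [integral_const_mul, integral_pow_div_mul_exp hμ, Fin.sum_univ_five, Matrix.cons_val,
    Fin.coe_ofNat_eq_mod, Nat.reduceMod, Nat.factorial]
  field_simp
  norm_num

theorem integral_boundaryTest_mul {g : ℝ → ℝ}
    (hg : ∀ k ≤ 2, IntegrableOn (fun v => v ^ k * g v) (Ioi 0))
    (h1 : ∫ v in Ioi 0, v * g v = 0) (h2 : ∫ v in Ioi 0, v ^ 2 * g v = 0) :
    ∫ v in Ioi 0, boundaryTest μ v * g v = ∫ v in Ioi 0, g v := by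
  have hg0 : IntegrableOn g (Ioi 0) := by simpa using hg 0 (by norm_num)
  have hg1 : IntegrableOn (fun v => v * g v) (Ioi 0) := by simpa using hg 1 (by norm_num)
  have hsplit : ∀ v, boundaryTest μ v * g v
      = g v - (μ⁻¹ * (v * g v) - (6 * μ ^ 2)⁻¹ * (v ^ 2 * g v)) := by
    intro v
    simp only [boundaryTest]
    ring
  simp only [hsplit]
  rw [integral_sub hg0 ((hg1.const_mul _).sub' ((hg 2 le_rfl).const_mul _)),
    integral_sub (hg1.const_mul _) ((hg 2 le_rfl).const_mul _), integral_const_mul,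
    integral_const_mul, h1, h2]
  ring

end BoundaryTest

theorem boundary_value_estimate_general
    (μ : ℝ) (hμ : 0 < μ)
    (r r' : ℝ → ℝ)
    (hderiv : ∀ v : ℝ, 0 ≤ v → HasDerivAt r (r' v) v)
    (hint : IntegrableOn r (Ioi 0))
    (hint1 : IntegrableOn (fun v => v * r v) (Ioi 0))
    (hzero : ∫ v in Ioi (0:ℝ), r v = 0)
    (hzero1 : ∫ v in Ioi (0:ℝ), v * r v = 0)
    (hweighted : IntegrableOn (fun v => μ * Real.exp (v / μ) * (r' v) ^ 2) (Ioi 0))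
    (hdecay : Tendsto (fun v => (1 + |v| + v ^ 2) * |r v|) atTop (nhds 0)) :
    (r 0) ^ 2 ≤ (1 / 3) * ∫ v in Ioi (0:ℝ), μ * Real.exp (v / μ) * (r' v) ^ 2 := by
  have hw : ∀ v, 0 < μ * Real.exp (v / μ) := fun v => by positivity
  have hr'meas := aestronglyMeasurable_of_hasDerivAt measurableSet_Ioi
    fun v (hv : 0 < v) => hderiv v hv.le
  have hmoment : ∀ k : ℕ, IntegrableOn (fun v => v ^ k * r' v) (Ioi 0) := fun k =>
    integrable_mul_of_weighted_sq hw
      ((continuous_pow k).aestronglyMeasurable.mul hr'meas)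
      ((integrableOn_pow_div_mul_exp hμ (2 * k)).congr_fun (fun v _ => by ring)
        measurableSet_Ioi) hweighted
  have hlim : ∀ k ≤ 2, Tendsto (fun v => v ^ k * r v) atTop (𝓝 0) := fun k hk =>
    tendsto_mul_of_abs_le (abs_pow_le_one_add_abs_add_sq hk) hdecay
  have h0 : ∫ v in Ioi 0, r' v = -r 0 := by
    rw [integral_Ioi_of_hasDerivAt_of_tendsto' hderiv (by simpa using hmoment 0)
      (by simpa using hlim 0 (by norm_num)), zero_sub]
  have h1 : ∫ v in Ioi 0, v * r' v = 0 := by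
    simpa [hzero] using integral_Ioi_pow_succ_mul_deriv_s17 0 hderiv (by simpa using hint)
      (hmoment 1) (hlim 1 (by norm_num))
  have h2 : ∫ v in Ioi 0, v ^ 2 * r' v = 0 := by
    simpa [hzero1] using integral_Ioi_pow_succ_mul_deriv_s17 1 hderiv (by simpa using hint1)
      (hmoment 2) (hlim 2 le_rfl)
  calc r 0 ^ 2 = (∫ v in Ioi 0, boundaryTest μ v * r' v) ^ 2 := by
        rw [integral_boundaryTest_mul (fun k _ => hmoment k) h1 h2, h0, neg_sq]
    _ ≤ (∫ v in Ioi 0, boundaryTest μ v ^ 2 / (μ * Real.exp (v / μ)))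
          * ∫ v in Ioi 0, μ * Real.exp (v / μ) * r' v ^ 2 :=
        sq_integral_mul_le_weighted hw
          ((by unfold boundaryTest; fun_prop : Continuous (boundaryTest μ)).aestronglyMeasurable.mul
            hr'meas)
          (integrableOn_boundaryTest_sq_div_mul_exp hμ) hweighted
    _ = 1 / 3 * ∫ v in Ioi 0, μ * Real.exp (v / μ) * r' v ^ 2 := by
        rw [integral_boundaryTest_sq_div_mul_exp hμ]

/-- **Boundary-value estimate (Lemma L1).**
Let `μ > 0` and `f∞(v) = (1/μ) e^{−v/μ}`. If `r : [0,∞) → ℝ` is continuously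
differentiable with `∫₀^∞ r(v) dv = 0` and `∫₀^∞ v r(v) dv = 0`, with
`∫₀^∞ |r'(v)|²/f∞(v) dv < ∞`, `r`, `v r`, `v² r'` integrable, and
`(1 + |v| + v²)|r(v)| → 0` as `v → ∞`, then
`r(0)² ≤ (1/3) ∫₀^∞ |r'(v)|²/f∞(v) dv = (1/3) ∫₀^∞ μ e^{v/μ} |r'(v)|² dv`. -/
theorem boundary_value_estimate
    (μ : ℝ) (hμ : 0 < μ)
    (r r' : ℝ → ℝ)
    (hderiv : ∀ v : ℝ, 0 ≤ v → HasDerivAt r (r' v) v)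
    (hcont : ContinuousOn r' (Ici 0))
    (hint : IntegrableOn r (Ioi 0))
    (hint1 : IntegrableOn (fun v => v * r v) (Ioi 0))
    (hint2 : IntegrableOn (fun v => v ^ 2 * r' v) (Ioi 0))
    (hzero : ∫ v in Ioi (0:ℝ), r v = 0)
    (hzero1 : ∫ v in Ioi (0:ℝ), v * r v = 0)
    (hweighted : IntegrableOn (fun v => μ * Real.exp (v / μ) * (r' v) ^ 2) (Ioi 0))
    (hdecay : Tendsto (fun v => (1 + |v| + v ^ 2) * |r v|) atTop (nhds 0)) :
    (r 0) ^ 2 ≤ (1 / 3) * ∫ v in Ioi (0:ℝ), μ * Real.exp (v / μ) * (r' v) ^ 2 :=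
  boundary_value_estimate_general μ hμ r r' hderiv hint hint1 hzero hzero1 hweighted hdecay
end

section
/- Let μ > 0 and let f∞(v) = (1/μ) e^{−v/μ}. Let r : [0,∞) → ℝ be continuously differentiable with ∫₀^∞ |r'(v)|² / f∞(v) dv < ∞, r' integrable on (v,∞) for each v with r(v) = − ∫_v^∞ r'(y) dy (in particular r(v) → 0 as v → ∞), and ∫₀^∞ |r(v)|² / f∞(v) dv < ∞. Then the Poincaré-type inequality ∫₀^∞ |r(v)|² / f∞(v) dv ≤ 4 μ² ∫₀^∞ |r'(v)|² / f∞(v) dv holds, i.e. ∫₀^∞ μ e^{v/μ} |r(v)|² dv ≤ 4 μ² ∫₀^∞ μ e^{v/μ} |r'(v)|² dv. -/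
open MeasureTheory Set Filter

/-!
The weight `w v = μ e^{v/μ}` solves `w' = w / μ`, so `g = μ w r²` has derivative
`g' = w r² + 2 μ w r r'`. As `g` and `g'` are integrable on `(a, ∞)`, `g` vanishes at infinity
and `∫ g' = -g a ≤ 0`. Bounding the cross term by `-2 μ w r r' ≤ w r² / 2 + 2 μ² w r'²`
(i.e. `w (r + 2 μ r')² ≥ 0`) gives `(1/2) ∫ w r² ≤ ∫ g' + 2 μ² ∫ w r'² ≤ 2 μ² ∫ w r'²`.
-/

theorem integral_Ioi_eq_neg_of_hasDerivAt_of_integrableOn {E : Type*} [NormedAddCommGroup E]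
    [NormedSpace ℝ E] [CompleteSpace E] {f f' : ℝ → E} {a : ℝ}
    (hderiv : ∀ x ∈ Ici a, HasDerivAt f (f' x) x) (f'int : IntegrableOn f' (Ioi a))
    (fint : IntegrableOn f (Ioi a)) :
    ∫ x in Ioi a, f' x = -f a := by
  have hlim := tendsto_zero_of_hasDerivAt_of_integrableOn_Ioi
    (fun x hx => hderiv x (mem_Ici_of_Ioi hx)) f'int fint
  rw [integral_Ioi_of_hasDerivAt_of_tendsto' hderiv f'int hlim, zero_sub]

theorem integrable_mul_mul_of_integrable_mul_sq {α : Type*} [MeasurableSpace α] {ν : Measure α}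
    {w f g : α → ℝ} (hw : ∀ x, 0 ≤ w x)
    (hf : Integrable (fun x => w x * f x ^ 2) ν) (hg : Integrable (fun x => w x * g x ^ 2) ν)
    (hmeas : AEStronglyMeasurable (fun x => w x * (f x * g x)) ν) :
    Integrable (fun x => w x * (f x * g x)) ν := by
  refine (hf.add hg).mono' hmeas (Eventually.of_forall fun x => ?_)
  have hfg : |f x * g x| ≤ f x ^ 2 + g x ^ 2 := by
    rw [abs_mul]
    nlinarith [two_mul_le_add_sq |f x| |g x|, sq_abs (f x), sq_abs (g x),
      abs_nonneg (f x), abs_nonneg (g x)]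
  rw [Pi.add_apply, Real.norm_eq_abs, abs_mul, abs_of_nonneg (hw x), ← mul_add]
  exact mul_le_mul_of_nonneg_left hfg (hw x)

theorem aestronglyMeasurable_restrict_Ioi_of_hasDerivAt {r r' : ℝ → ℝ} {a : ℝ}
    (hderiv : ∀ v ∈ Ici a, HasDerivAt r (r' v) v) :
    AEStronglyMeasurable r' (volume.restrict (Ioi a)) := by
  refine (stronglyMeasurable_deriv r).aestronglyMeasurable.congr ?_
  filter_upwards [self_mem_ae_restrict measurableSet_Ioi] with v hv
  exact (hderiv v (mem_Ici_of_Ioi hv)).deriv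

section WeightedPoincare

variable {μ a : ℝ} {w r r' : ℝ → ℝ}

theorem hasDerivAt_const_mul_weight_mul_sq (hμ : μ ≠ 0) {v : ℝ}
    (hw : HasDerivAt w (w v / μ) v) (hr : HasDerivAt r (r' v) v) :
    HasDerivAt (fun x => μ * (w x * r x ^ 2))
      (w v * r v ^ 2 + 2 * μ * (w v * (r v * r' v))) v := by
  refine ((hw.fun_mul (hr.fun_pow 2)).const_mul μ).congr_deriv ?_
  field_simp
  ring

theorem integrable_weight_mul_mul_deriv
    (hw : ∀ v, HasDerivAt w (w v / μ) v) (hw0 : ∀ v, 0 ≤ w v)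
    (hr : ∀ v ∈ Ici a, HasDerivAt r (r' v) v)
    (hwr : IntegrableOn (fun v => w v * r v ^ 2) (Ioi a))
    (hwr' : IntegrableOn (fun v => w v * r' v ^ 2) (Ioi a)) :
    IntegrableOn (fun v => w v * (r v * r' v)) (Ioi a) := by
  have hw_meas : AEStronglyMeasurable w (volume.restrict (Ioi a)) :=
    (continuous_iff_continuousAt.2 fun v => (hw v).continuousAt).aestronglyMeasurable
  have hr_meas : AEStronglyMeasurable r (volume.restrict (Ioi a)) :=
    ContinuousOn.aestronglyMeasurable
      (fun v hv => (hr v (mem_Ici_of_Ioi hv)).continuousAt.continuousWithinAt) measurableSet_Ioi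
  exact integrable_mul_mul_of_integrable_mul_sq hw0 hwr hwr'
    (hw_meas.mul (hr_meas.mul (aestronglyMeasurable_restrict_Ioi_of_hasDerivAt hr)))

theorem integral_weight_mul_sq_le (hμ : 0 < μ)
    (hw : ∀ v, HasDerivAt w (w v / μ) v) (hw0 : ∀ v, 0 ≤ w v)
    (hr : ∀ v ∈ Ici a, HasDerivAt r (r' v) v)
    (hwr : IntegrableOn (fun v => w v * r v ^ 2) (Ioi a))
    (hwr' : IntegrableOn (fun v => w v * r' v ^ 2) (Ioi a)) :
    ∫ v in Ioi a, w v * r v ^ 2 ≤ 4 * μ ^ 2 * ∫ v in Ioi a, w v * r' v ^ 2 := by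
  set g' : ℝ → ℝ := fun v => w v * r v ^ 2 + 2 * μ * (w v * (r v * r' v))
  have hg'int : IntegrableOn g' (Ioi a) :=
    hwr.add ((integrable_weight_mul_mul_deriv hw hw0 hr hwr hwr').const_mul _)
  have hg'_nonpos : ∫ v in Ioi a, g' v ≤ 0 := by
    have hgint : IntegrableOn (fun v => μ * (w v * r v ^ 2)) (Ioi a) := hwr.const_mul μ
    rw [integral_Ioi_eq_neg_of_hasDerivAt_of_integrableOn
      (fun v hv => hasDerivAt_const_mul_weight_mul_sq hμ.ne' (hw v) (hr v hv)) hg'int hgint,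
      neg_nonpos]
    exact mul_nonneg hμ.le (mul_nonneg (hw0 a) (sq_nonneg _))
  have hpointwise : ∀ v, (1 / 2) * (w v * r v ^ 2) ≤ g' v + 2 * μ ^ 2 * (w v * r' v ^ 2) :=
    fun v => by nlinarith [mul_nonneg (hw0 v) (sq_nonneg (r v + 2 * μ * r' v))]
  have hmono : ∫ v in Ioi a, (1 / 2) * (w v * r v ^ 2)
      ≤ ∫ v in Ioi a, (g' v + 2 * μ ^ 2 * (w v * r' v ^ 2)) :=
    setIntegral_mono (hwr.const_mul (1 / 2)) (hg'int.add (hwr'.const_mul _)) hpointwise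
  rw [integral_const_mul, integral_add hg'int (hwr'.const_mul _), integral_const_mul] at hmono
  linarith

end WeightedPoincare

theorem poincare_type_inequality_general
    (μ : ℝ) (hμ : 0 < μ)
    (r r' : ℝ → ℝ)
    (hderiv : ∀ v : ℝ, 0 ≤ v → HasDerivAt r (r' v) v)
    (hweighted : IntegrableOn (fun v => μ * Real.exp (v / μ) * (r v) ^ 2) (Ioi 0))
    (hweighted' : IntegrableOn (fun v => μ * Real.exp (v / μ) * (r' v) ^ 2) (Ioi 0)) :
    ∫ v in Ioi (0:ℝ), μ * Real.exp (v / μ) * (r v) ^ 2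
      ≤ 4 * μ ^ 2 * ∫ v in Ioi (0:ℝ), μ * Real.exp (v / μ) * (r' v) ^ 2 := by
  have hw : ∀ v, HasDerivAt (fun x => μ * Real.exp (x / μ)) (μ * Real.exp (v / μ) / μ) v := by
    intro v
    refine ((((hasDerivAt_id' v).div_const μ).exp).const_mul μ).congr_deriv ?_
    field_simp
  exact integral_weight_mul_sq_le hμ hw (fun v => by positivity) hderiv hweighted hweighted'

/-- **Poincaré-type inequality with exponential weight (Lemma L2).**
Let `μ > 0` and `f∞(v) = (1/μ) e^{−v/μ}`. If `r : [0,∞) → ℝ` is continuously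
differentiable with `∫₀^∞ |r'(v)|²/f∞(v) dv < ∞`, `r'` integrable on `(v,∞)` for each
`v ≥ 0` with `r(v) = −∫_v^∞ r'(y) dy` (in particular `r(v) → 0` as `v → ∞`), and
`∫₀^∞ |r(v)|²/f∞(v) dv < ∞`, then
`∫₀^∞ |r(v)|²/f∞(v) dv ≤ 4μ² ∫₀^∞ |r'(v)|²/f∞(v) dv`, i.e.
`∫₀^∞ μ e^{v/μ} |r(v)|² dv ≤ 4μ² ∫₀^∞ μ e^{v/μ} |r'(v)|² dv`. -/
theorem poincare_type_inequality
    (μ : ℝ) (hμ : 0 < μ)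
    (r r' : ℝ → ℝ)
    (hderiv : ∀ v : ℝ, 0 ≤ v → HasDerivAt r (r' v) v)
    (hcont : ContinuousOn r' (Ici 0))
    (hr'int : ∀ v : ℝ, 0 ≤ v → IntegrableOn r' (Ioi v))
    (hrepr : ∀ v : ℝ, 0 ≤ v → r v = -∫ y in Ioi v, r' y)
    (hweighted : IntegrableOn (fun v => μ * Real.exp (v / μ) * (r v) ^ 2) (Ioi 0))
    (hweighted' : IntegrableOn (fun v => μ * Real.exp (v / μ) * (r' v) ^ 2) (Ioi 0)) :
    ∫ v in Ioi (0:ℝ), μ * Real.exp (v / μ) * (r v) ^ 2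
      ≤ 4 * μ ^ 2 * ∫ v in Ioi (0:ℝ), μ * Real.exp (v / μ) * (r' v) ^ 2 :=
  poincare_type_inequality_general μ hμ r r' hderiv hweighted hweighted'
end
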